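/- arXiv:math/9811149 — 7 statements merged into one kernel-verified Lean document; each statement's English description precedes it below -/
import Mathlib

section
/- Let (f_i)_{i=1}^∞ be a frame for a Hilbert space H. Then (f_i) is a Riesz frame if and only if there exists A > 0 such that for every finite set Δ ⊆ ℕ for which the family (f_i)_{i∈Δ} is linearly independent, one has √A·(Σ_{i∈Δ}|a_i|²)^{1/2} ≤ ‖Σ_{i∈Δ} a_i f_i‖ for all scalars (a_i)_{i∈Δ} (equivalently, (f_i)_{i∈Δ} has lower frame bound A on its span). -/
open scoped ComplexInnerProductSpace
open Submodule Filter

noncomputable section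

variable {H : Type*} [NormedAddCommGroup H] [InnerProductSpace ℂ H] [CompleteSpace H]

/-- The closed linear span of a set of vectors. -/
def closedSpan (s : Set H) : Submodule ℂ H := (Submodule.span ℂ s).topologicalClosure

/-- `f` is a frame for the closed subspace `K` with frame bounds `A`, `B`. -/
def IsFrameFor {ι : Type*} (f : ι → H) (K : Submodule ℂ H) (A B : ℝ) : Prop :=
  (∀ i, f i ∈ K) ∧ ∀ g ∈ K,
    Summable (fun i => ‖⟪g, f i⟫‖ ^ 2) ∧
    A * ‖g‖ ^ 2 ≤ ∑' i, ‖⟪g, f i⟫‖ ^ 2 ∧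
    ∑' i, ‖⟪g, f i⟫‖ ^ 2 ≤ B * ‖g‖ ^ 2

/-- `f` is a frame for the closed linear span of its terms, with bounds `A`, `B`. -/
def IsFrameSequence {ι : Type*} (f : ι → H) (A B : ℝ) : Prop :=
  IsFrameFor f (closedSpan (Set.range f)) A B

/-- Riesz frame with given uniform (Riesz frame) bounds. -/
def IsRieszFrameWith {ι : Type*} (f : ι → H) (A B : ℝ) : Prop :=
  closedSpan (Set.range f) = ⊤ ∧
  ∀ Δ : Set ι, IsFrameSequence (fun i : Δ => f i) A B

def IsRieszFrame {ι : Type*} (f : ι → H) : Prop :=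
  ∃ A B : ℝ, 0 < A ∧ 0 < B ∧ IsRieszFrameWith f A B

def HasSubframeProperty {ι : Type*} (f : ι → H) : Prop :=
  ∀ Δ : Set ι, ∃ A B : ℝ, 0 < A ∧ 0 < B ∧ IsFrameSequence (fun i : Δ => f i) A B

/-- Riesz basis for the whole space. -/
def IsRieszBasis {ι : Type*} (g : ι → H) : Prop :=
  closedSpan (Set.range g) = ⊤ ∧ ∃ c C : ℝ, 0 < c ∧ 0 < C ∧
    ∀ a : ι →₀ ℂ,
      c * Real.sqrt (∑ i ∈ a.support, ‖a i‖ ^ 2) ≤ ‖∑ i ∈ a.support, a i • g i‖ ∧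
      ‖∑ i ∈ a.support, a i • g i‖ ≤ C * Real.sqrt (∑ i ∈ a.support, ‖a i‖ ^ 2)

/-- The orthogonal projection of `H` onto the closed linear span of `s`, as a map `H → H`. -/
def projSpan (s : Set H) : H →L[ℂ] H :=
  haveI : CompleteSpace (closedSpan s : Submodule ℂ H) :=
    (Submodule.isClosed_topologicalClosure _).completeSpace_coe
  (closedSpan s).subtypeL.comp (orthogonalProjection (closedSpan s))

/-!
For a finite linearly independent family `(v i)_{i ∈ s}` with span `W`, the analysis map
`g ↦ (⟪v i, g⟫)_i` is a bijection from `W` onto `𝕜^s`. Pairing `x = ∑ a i • v i` with the `g ∈ W`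
satisfying `⟪v i, g⟫ = a i` gives `∑ ‖a i‖² = ⟪x, g⟫ ≤ ‖x‖ ‖g‖`, so a lower frame bound `A` on `W`
yields the lower Riesz bound `√A ‖a‖ ≤ ‖x‖`; conversely Cauchy–Schwarz applied to
`‖x‖² = ∑ a i ⟪x, v i⟫` turns the lower Riesz bound into the lower frame bound on `W`.

For an arbitrary subfamily, each vector of its algebraic span already lies in the span of a finite
linearly independent subfamily, so the uniform lower Riesz bound gives the lower frame bound there.
The upper frame bound makes `g ↦ ∑' i, ‖⟪g, v i⟫‖²` continuous (it is `‖U g‖²` for the bounded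
analysis operator `U` into `ℓ²`), so the lower bound passes to the closed span.
-/

open scoped ENNReal InnerProductSpace

theorem mul_le_of_sq_le_mul_of_mul_le {c x y z : ℝ} (hc : 0 ≤ c) (hy : 0 ≤ y)
    (hxyz : x ^ 2 ≤ y * z) (hcz : c * z ≤ x) : c * x ≤ y := by
  rcases le_or_gt x 0 with hx | hx
  · nlinarith
  · nlinarith [mul_le_mul_of_nonneg_left hcz hy]

theorem exists_finset_subset_linearIndepOn_mem_span {K V ι : Type*} [DivisionRing K]
    [AddCommGroup V] [Module K V] {v : ι → V} {s : Set ι} {x : V}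
    (hx : x ∈ span K (v '' s)) :
    ∃ t : Finset ι, ↑t ⊆ s ∧ LinearIndepOn K v t ∧ x ∈ span K (v '' t) := by
  obtain ⟨u, hus, c, rfl⟩ := (mem_span_image_iff_exists_fun K).mp hx
  obtain ⟨b, hbu, -, hspan, hb⟩ :=
    exists_linearIndepOn_extension (linearIndepOn_empty K v) (Set.empty_subset (u : Set ι))
  have hfin : b.Finite := u.finite_toSet.subset hbu
  refine ⟨hfin.toFinset, by simpa using hbu.trans hus, by simpa using hb, ?_⟩
  rw [hfin.coe_toFinset]
  exact span_le.mpr hspan (sum_smul_mem _ c fun i _ => subset_span (Set.mem_image_of_mem v i.2))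

section InnerProductSpace

variable {𝕜 E ι : Type*} [RCLike 𝕜] [NormedAddCommGroup E] [InnerProductSpace 𝕜 E]

section FiniteFamily

variable {s : Finset ι} {v : ι → E}

theorem exists_mem_span_inner_eq_of_linearIndepOn (hv : LinearIndepOn 𝕜 v s) (a : ι → 𝕜) :
    ∃ g ∈ span 𝕜 (v '' s), ∀ i ∈ s, ⟪v i, g⟫_𝕜 = a i := by
  have : FiniteDimensional 𝕜 (span 𝕜 (v '' s)) :=
    FiniteDimensional.span_of_finite 𝕜 (s.finite_toSet.image v)
  let R : span 𝕜 (v '' s) →ₗ[𝕜] s → 𝕜 :=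
    LinearMap.pi fun i => (innerₛₗ 𝕜 (v i)).domRestrict _
  have hR : Function.Injective R := by
    refine (injective_iff_map_eq_zero R).mpr fun g hg => ?_
    have hperp : span 𝕜 (v '' s) ≤ (𝕜 ∙ (g : E))ᗮ := span_le.mpr <| by
      rintro _ ⟨i, hi, rfl⟩
      exact mem_orthogonal_singleton_iff_inner_left.mpr (congrFun hg ⟨i, hi⟩)
    exact Subtype.ext <| inner_self_eq_zero.mp <|
      mem_orthogonal_singleton_iff_inner_left.mp (hperp g.2)
  have hdim : Module.finrank 𝕜 (span 𝕜 (v '' s)) = Module.finrank 𝕜 (s → 𝕜) := by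
    rw [Module.finrank_fintype_fun_eq_card, Set.image_eq_range, finrank_span_eq_card hv]
    rfl
  obtain ⟨g, hg⟩ := (LinearMap.injective_iff_surjective_of_finrank_eq_finrank hdim).mp hR
    fun i => a i
  exact ⟨g, g.2, fun i hi => congrFun hg ⟨i, hi⟩⟩

theorem lower_riesz_bound_of_lower_frame_bound (hv : LinearIndepOn 𝕜 v s) {A : ℝ}
    (hA : ∀ g ∈ span 𝕜 (v '' s), A * ‖g‖ ^ 2 ≤ ∑ i ∈ s, ‖⟪g, v i⟫_𝕜‖ ^ 2) (a : ι → 𝕜) :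
    √A * √(∑ i ∈ s, ‖a i‖ ^ 2) ≤ ‖∑ i ∈ s, a i • v i‖ := by
  obtain ⟨g, hgW, hg⟩ := exists_mem_span_inner_eq_of_linearIndepOn hv a
  have hS : 0 ≤ ∑ i ∈ s, ‖a i‖ ^ 2 := by positivity
  have hinner : ⟪∑ i ∈ s, a i • v i, g⟫_𝕜 = ((∑ i ∈ s, ‖a i‖ ^ 2 : ℝ) : 𝕜) := by
    rw [sum_inner, RCLike.ofReal_sum]
    refine Finset.sum_congr rfl fun i hi => ?_
    rw [inner_smul_left, hg i hi, RCLike.conj_mul, RCLike.ofReal_pow]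
  have hS_le : ∑ i ∈ s, ‖a i‖ ^ 2 ≤ ‖∑ i ∈ s, a i • v i‖ * ‖g‖ := by
    have := norm_inner_le_norm (𝕜 := 𝕜) (∑ i ∈ s, a i • v i) g
    rwa [hinner, RCLike.norm_ofReal, abs_of_nonneg hS] at this
  have hg_le : √A * ‖g‖ ≤ √(∑ i ∈ s, ‖a i‖ ^ 2) := by
    rw [← Real.sqrt_sq (norm_nonneg g), ← Real.sqrt_mul' _ (sq_nonneg _)]
    refine Real.sqrt_le_sqrt ((hA g hgW).trans_eq (Finset.sum_congr rfl fun i hi => ?_))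
    rw [← inner_conj_symm, hg i hi, RCLike.norm_conj]
  exact mul_le_of_sq_le_mul_of_mul_le (Real.sqrt_nonneg A) (norm_nonneg _)
    (by rwa [Real.sq_sqrt hS]) hg_le

theorem lower_frame_bound_of_lower_riesz_bound {A : ℝ} (hA : 0 ≤ A)
    (hv : ∀ a : ι → 𝕜, √A * √(∑ i ∈ s, ‖a i‖ ^ 2) ≤ ‖∑ i ∈ s, a i • v i‖) {g : E}
    (hg : g ∈ span 𝕜 (v '' s)) :
    A * ‖g‖ ^ 2 ≤ ∑ i ∈ s, ‖⟪g, v i⟫_𝕜‖ ^ 2 := by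
  obtain ⟨a, rfl⟩ := (mem_span_image_finset_iff_exists_fun' 𝕜).mp hg
  set g := ∑ i ∈ s, a i • v i
  have hT : 0 ≤ ∑ i ∈ s, ‖⟪g, v i⟫_𝕜‖ ^ 2 := by positivity
  have hg_sq : ‖g‖ ^ 2 ≤ √(∑ i ∈ s, ‖⟪g, v i⟫_𝕜‖ ^ 2) * √(∑ i ∈ s, ‖a i‖ ^ 2) := calc
    ‖g‖ ^ 2 = ‖⟪g, g⟫_𝕜‖ := by
      rw [inner_self_eq_norm_sq_to_K, norm_pow, RCLike.norm_ofReal, abs_norm]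
    _ = ‖∑ i ∈ s, a i * ⟪g, v i⟫_𝕜‖ := by simp only [g, inner_sum, inner_smul_right]
    _ ≤ ∑ i ∈ s, ‖⟪g, v i⟫_𝕜‖ * ‖a i‖ := by
      refine (norm_sum_le _ _).trans_eq (Finset.sum_congr rfl fun i _ => ?_)
      rw [norm_mul, mul_comm]
    _ ≤ _ := Real.sum_mul_le_sqrt_mul_sqrt _ _ _
  have hsqrt := mul_le_of_sq_le_mul_of_mul_le (Real.sqrt_nonneg A) (Real.sqrt_nonneg _) hg_sq (hv a)
  rwa [Real.le_sqrt (by positivity) hT, mul_pow, Real.sq_sqrt hA] at hsqrt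

end FiniteFamily

theorem lower_frame_bound_on_span_of_lower_riesz_bound {v : ι → E} {A : ℝ} (hA : 0 ≤ A)
    (hv : ∀ t : Finset ι, LinearIndepOn 𝕜 v t →
      ∀ a : ι → 𝕜, √A * √(∑ i ∈ t, ‖a i‖ ^ 2) ≤ ‖∑ i ∈ t, a i • v i‖)
    {s : Set ι} {g : E} (hsum : Summable fun i : s => ‖⟪g, v i⟫_𝕜‖ ^ 2)
    (hg : g ∈ span 𝕜 (v '' s)) :
    A * ‖g‖ ^ 2 ≤ ∑' i : s, ‖⟪g, v i⟫_𝕜‖ ^ 2 := by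
  obtain ⟨t, hts, ht, hgt⟩ := exists_finset_subset_linearIndepOn_mem_span hg
  calc A * ‖g‖ ^ 2 ≤ ∑ i ∈ t, ‖⟪g, v i⟫_𝕜‖ ^ 2 :=
        lower_frame_bound_of_lower_riesz_bound hA (hv t ht) hgt
    _ = ∑' i : (t : Set ι), ‖⟪g, v i⟫_𝕜‖ ^ 2 := (Finset.tsum_subtype t _).symm
    _ ≤ ∑' i : s, ‖⟪g, v i⟫_𝕜‖ ^ 2 :=
      Summable.tsum_le_tsum_of_inj _ (Set.inclusion_injective hts) (fun _ _ => by positivity)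
        (fun _ => le_rfl) .of_finite hsum

variable (𝕜) in
def IsBesselSequence (v : ι → E) (B : ℝ) : Prop :=
  ∀ g, Summable (fun i => ‖⟪g, v i⟫_𝕜‖ ^ 2) ∧ ∑' i, ‖⟪g, v i⟫_𝕜‖ ^ 2 ≤ B * ‖g‖ ^ 2

namespace IsBesselSequence

variable {v : ι → E} {B : ℝ}

theorem restrict (hv : IsBesselSequence 𝕜 v B) (s : Set ι) :
    IsBesselSequence 𝕜 (fun i : s => v i) B := fun g =>
  ⟨(hv g).1.subtype s,
    (Summable.tsum_subtype_le _ s (fun _ => by positivity) (hv g).1).trans (hv g).2⟩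

theorem continuous_tsum (hv : IsBesselSequence 𝕜 v B) :
    Continuous fun g => ∑' i, ‖⟪g, v i⟫_𝕜‖ ^ 2 := by
  have hmem (g : E) : Memℓp (fun i => ⟪v i, g⟫_𝕜) 2 := by
    rw [memℓp_gen_iff (by norm_num), ENNReal.toReal_ofNat]
    simpa only [Real.rpow_two, norm_inner_symm] using (hv g).1
  have hnorm (g : E) :
      ‖(⟨_, hmem g⟩ : lp (fun _ : ι => 𝕜) 2)‖ ^ 2 = ∑' i, ‖⟪g, v i⟫_𝕜‖ ^ 2 := by
    have := lp.norm_rpow_eq_tsum (by norm_num) (⟨_, hmem g⟩ : lp (fun _ : ι => 𝕜) 2)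
    simpa only [ENNReal.toReal_ofNat, Real.rpow_two, norm_inner_symm] using this
  let U : E →ₗ[𝕜] lp (fun _ : ι => 𝕜) 2 :=
    { toFun := fun g => ⟨_, hmem g⟩
      map_add' := fun g h => lp.ext <| funext fun i => inner_add_right _ _ _
      map_smul' := fun c g => lp.ext <| funext fun i => inner_smul_right _ _ _ }
  have hU (g : E) : ‖U g‖ ≤ √B * ‖g‖ := by
    rw [← Real.sqrt_sq (norm_nonneg (U g)), ← Real.sqrt_sq (norm_nonneg g),
      ← Real.sqrt_mul' _ (sq_nonneg _)]
    exact Real.sqrt_le_sqrt ((hnorm g).trans_le (hv g).2)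
  have hcont : Continuous fun g => ‖U.mkContinuous _ hU g‖ ^ 2 := by fun_prop
  exact hcont.congr hnorm

theorem lower_bound_topologicalClosure (hv : IsBesselSequence 𝕜 v B) {A : ℝ}
    (hA : ∀ g ∈ span 𝕜 (Set.range v), A * ‖g‖ ^ 2 ≤ ∑' i, ‖⟪g, v i⟫_𝕜‖ ^ 2) :
    ∀ g ∈ (span 𝕜 (Set.range v)).topologicalClosure,
      A * ‖g‖ ^ 2 ≤ ∑' i, ‖⟪g, v i⟫_𝕜‖ ^ 2 := by
  have hclosed : IsClosed {g : E | A * ‖g‖ ^ 2 ≤ ∑' i, ‖⟪g, v i⟫_𝕜‖ ^ 2} :=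
    isClosed_le (by fun_prop) hv.continuous_tsum
  intro g hg
  rw [← SetLike.mem_coe, Submodule.topologicalClosure_coe] at hg
  exact closure_minimal hA hclosed hg

end IsBesselSequence

end InnerProductSpace

section Frames

variable {V κ : Type*} [NormedAddCommGroup V] [InnerProductSpace ℂ V] {f : κ → V} {A B : ℝ}

theorem IsFrameFor.isBesselSequence (hf : IsFrameFor f ⊤ A B) : IsBesselSequence ℂ f B :=
  fun g => ⟨(hf.2 g trivial).1, (hf.2 g trivial).2.2⟩

theorem IsFrameFor.closedSpan_eq_top [CompleteSpace V] (hf : IsFrameFor f ⊤ A B) (hA : 0 < A) :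
    closedSpan (Set.range f) = ⊤ := by
  rw [closedSpan, topologicalClosure_eq_top_iff, eq_bot_iff]
  intro g hg
  have hzero : ∀ i, ⟪g, f i⟫ = 0 := fun i =>
    inner_left_of_mem_orthogonal (subset_span (Set.mem_range_self i)) hg
  have hg2 : ‖g‖ ^ 2 ≤ 0 :=
    le_of_mul_le_mul_left (by simpa [hzero] using (hf.2 g trivial).2.1) hA
  simpa using hg2

theorem IsBesselSequence.isFrameSequence (hf : IsBesselSequence ℂ f B)
    (hA : ∀ g ∈ span ℂ (Set.range f), A * ‖g‖ ^ 2 ≤ ∑' i, ‖⟪g, f i⟫‖ ^ 2) :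
    IsFrameSequence f A B :=
  ⟨fun i => le_topologicalClosure _ (subset_span (Set.mem_range_self i)),
    fun g hg => ⟨(hf g).1, hf.lower_bound_topologicalClosure hA g hg, (hf g).2⟩⟩

end Frames

/-- **Proposition 2.1.** A frame is a Riesz frame iff there is a uniform lower Riesz
basis bound for all finite linearly independent subfamilies. -/
theorem riesz_frame_iff_uniform_lower_riesz_bound
    (f : ℕ → H) (A₀ B₀ : ℝ) (hA₀ : 0 < A₀) (hB₀ : 0 < B₀)
    (hf : IsFrameFor f (⊤ : Submodule ℂ H) A₀ B₀) :
    IsRieszFrame f ↔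
      ∃ A : ℝ, 0 < A ∧ ∀ Δ : Finset ℕ,
        LinearIndependent ℂ (fun i : Δ => f i) →
        ∀ a : ℕ → ℂ,
          Real.sqrt A * Real.sqrt (∑ i ∈ Δ, ‖a i‖ ^ 2) ≤ ‖∑ i ∈ Δ, a i • f i‖ := by
  constructor
  · rintro ⟨A, B, hA, -, -, hsub⟩
    refine ⟨A, hA, fun Δ hΔ a => lower_riesz_bound_of_lower_frame_bound hΔ (fun g hg => ?_) a⟩
    rw [Set.image_eq_range] at hg
    rw [← Finset.tsum_subtype]
    exact ((hsub Δ).2 g (le_topologicalClosure _ hg)).2.1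
  · rintro ⟨A, hA, hb⟩
    have hbessel := hf.isBesselSequence
    refine ⟨A, B₀, hA, hB₀, hf.closedSpan_eq_top hA₀, fun Δ =>
      (hbessel.restrict Δ).isFrameSequence fun g hg => ?_⟩
    rw [← Set.image_eq_range] at hg
    exact lower_frame_bound_on_span_of_lower_riesz_bound hA.le hb ((hbessel.restrict Δ) g).1 hg

end
end

section
/- Every Riesz frame (f_i)_{i=1}^∞ for a Hilbert space H contains a subfamily (f_i)_{i∈Δ} which is a Riesz basis for H. -/
open scoped ComplexInnerProductSpace
open Submodule Filter

noncomputable section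

variable {H : Type*} [NormedAddCommGroup H] [InnerProductSpace ℂ H] [CompleteSpace H]

/-!
By Zorn's lemma a frame contains a maximal linearly independent subfamily; its span contains every
frame vector, so it is dense. On a finite linearly independent family, frame bounds `A`, `B` for
its span become the Riesz bounds `√A`, `√B`: the upper one by Cauchy–Schwarz applied to
`‖∑ bᵢ vᵢ‖² = ∑ bᵢ ⟪∑ bⱼ vⱼ, vᵢ⟫`, the lower one by testing `∑ bᵢ vᵢ` against the vector of the
span whose inner products with the `vᵢ` are the `bᵢ`. For a Riesz frame these bounds hold on every
finite subfamily of the maximal one, uniformly.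
-/

lemma le_of_mul_self_le_mul {α : Type*} [Semiring α] [LinearOrder α] [IsStrictOrderedRing α]
    {a c : α} (ha : 0 ≤ a) (hc : 0 ≤ c) (h : a * a ≤ c * a) : a ≤ c := by
  rcases ha.eq_or_lt with rfl | ha
  · exact hc
  · exact le_of_mul_le_mul_right h ha

section Frames

variable {E ι : Type*} [NormedAddCommGroup E] [InnerProductSpace ℂ E] {v : ι → E} {s : Finset ι}
  {A B : ℝ}

lemma exists_mem_span_inner_eq (hli : LinearIndepOn ℂ v (s : Set ι)) (b : ι → ℂ) :
    ∃ g ∈ span ℂ (v '' s), ∀ i ∈ s, ⟪v i, g⟫ = b i := by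
  rw [Set.image_eq_range]
  set V := span ℂ (Set.range fun i : (s : Set ι) => v i)
  have : FiniteDimensional ℂ V := FiniteDimensional.span_of_finite ℂ (Set.finite_range _)
  let Φ : V →ₗ[ℂ] (s → ℂ) := LinearMap.pi fun i => (innerSL ℂ (v i)).toLinearMap ∘ₗ V.subtype
  have hinj : Function.Injective Φ := by
    rw [← LinearMap.ker_eq_bot, LinearMap.ker_eq_bot']
    intro g hg
    have hV : V ≤ (ℂ ∙ (g : E))ᗮ := by
      refine span_le.2 ?_
      rintro _ ⟨i, rfl⟩
      rw [SetLike.mem_coe, mem_orthogonal_singleton_iff_inner_right, ← inner_conj_symm]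
      simpa [Φ] using congrArg (starRingEnd ℂ) (congrFun hg i)
    exact Subtype.ext <| inner_self_eq_zero.mp <|
      mem_orthogonal_singleton_iff_inner_right.mp (hV g.2)
  have hdim : Module.finrank ℂ V = Module.finrank ℂ (s → ℂ) := by
    rw [finrank_span_eq_card hli]
    simp
  obtain ⟨g, hg⟩ :=
    (LinearMap.injective_iff_surjective_of_finrank_eq_finrank hdim).mp hinj (fun i => b i)
  exact ⟨g, g.2, fun i hi => congrFun hg ⟨i, hi⟩⟩

lemma norm_sum_smul_le (hB : ∀ g ∈ span ℂ (v '' s), ∑ i ∈ s, ‖⟪g, v i⟫‖ ^ 2 ≤ B * ‖g‖ ^ 2)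
    (b : ι → ℂ) : ‖∑ i ∈ s, b i • v i‖ ≤ √B * √(∑ i ∈ s, ‖b i‖ ^ 2) := by
  set S := ∑ i ∈ s, b i • v i
  have hS : S ∈ span ℂ (v '' s) :=
    sum_mem fun i hi => smul_mem _ _ (subset_span (Set.mem_image_of_mem v hi))
  have hcoef : √(∑ i ∈ s, ‖⟪S, v i⟫‖ ^ 2) ≤ √B * ‖S‖ := by
    simpa [Real.sqrt_mul' B (sq_nonneg ‖S‖)] using Real.sqrt_le_sqrt (hB S hS)
  refine le_of_mul_self_le_mul (norm_nonneg S) (by positivity) ?_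
  calc ‖S‖ * ‖S‖ = ‖⟪S, S⟫‖ := by simp [inner_self_eq_norm_sq_to_K, sq]
    _ = ‖∑ i ∈ s, b i * ⟪S, v i⟫‖ := by simp only [S, inner_sum, inner_smul_right]
    _ ≤ ∑ i ∈ s, ‖b i‖ * ‖⟪S, v i⟫‖ := (norm_sum_le _ _).trans_eq (by simp)
    _ ≤ √(∑ i ∈ s, ‖b i‖ ^ 2) * √(∑ i ∈ s, ‖⟪S, v i⟫‖ ^ 2) :=
      Real.sum_mul_le_sqrt_mul_sqrt _ _ _
    _ ≤ √B * √(∑ i ∈ s, ‖b i‖ ^ 2) * ‖S‖ := by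
      rw [mul_comm √B, mul_assoc]
      gcongr

lemma le_norm_sum_smul (hli : LinearIndepOn ℂ v (s : Set ι))
    (hA : ∀ g ∈ span ℂ (v '' s), A * ‖g‖ ^ 2 ≤ ∑ i ∈ s, ‖⟪g, v i⟫‖ ^ 2) (b : ι → ℂ) :
    √A * √(∑ i ∈ s, ‖b i‖ ^ 2) ≤ ‖∑ i ∈ s, b i • v i‖ := by
  set S := ∑ i ∈ s, b i • v i
  set N := ∑ i ∈ s, ‖b i‖ ^ 2
  obtain ⟨g, hgV, hg⟩ := exists_mem_span_inner_eq hli b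
  have hgS : ⟪g, S⟫ = N := by
    simp only [S, N, inner_sum, inner_smul_right, Complex.ofReal_sum, Complex.ofReal_pow]
    refine Finset.sum_congr rfl fun i hi => ?_
    rw [← inner_conj_symm, hg i hi, Complex.mul_conj']
  have hg_norm : √A * ‖g‖ ≤ √N := by
    have hcoef : ∑ i ∈ s, ‖⟪g, v i⟫‖ ^ 2 = N :=
      Finset.sum_congr rfl fun i hi => by rw [← inner_conj_symm, hg i hi, RCLike.norm_conj]
    simpa [hcoef, Real.sqrt_mul' A (sq_nonneg ‖g‖)] using Real.sqrt_le_sqrt (hA g hgV)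
  refine le_of_mul_self_le_mul (by positivity) (norm_nonneg S) ?_
  calc √A * √N * (√A * √N) = √A * (√A * ‖⟪g, S⟫‖) := by
        rw [hgS, Complex.norm_real, Real.norm_of_nonneg (by positivity)]
        linear_combination (√A * √A) * Real.mul_self_sqrt (by positivity : (0 : ℝ) ≤ N)
    _ ≤ √A * (√A * (‖g‖ * ‖S‖)) := by
      gcongr
      exact norm_inner_le_norm g S
    _ ≤ √A * (√N * ‖S‖) := by
      rw [← mul_assoc √A ‖g‖]
      gcongr
    _ = ‖S‖ * (√A * √N) := by ring

lemma closedSpan_eq_span_of_finite {t : Set E} (ht : t.Finite) : closedSpan t = span ℂ t :=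
  have : FiniteDimensional ℂ (span ℂ t) := FiniteDimensional.span_of_finite ℂ ht
  (span ℂ t).closed_of_finiteDimensional.submodule_topologicalClosure_eq

lemma IsFrameSequence.comp_equiv {κ : Type*} (h : IsFrameSequence v A B) (e : κ ≃ ι) :
    IsFrameSequence (v ∘ e) A B := by
  obtain ⟨hmem, hbounds⟩ := h
  rw [IsFrameSequence, EquivLike.range_comp]
  refine ⟨fun k => hmem (e k), fun g hg => ?_⟩
  obtain ⟨hsum, hA, hB⟩ := hbounds g hg
  refine ⟨(e.summable_iff (f := fun i => ‖⟪g, v i⟫‖ ^ 2)).2 hsum, ?_, ?_⟩ <;>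
    simpa only [Function.comp_apply, e.tsum_eq (fun i => ‖⟪g, v i⟫‖ ^ 2)]

lemma IsFrameSequence.bounds_of_finset (h : IsFrameSequence (fun i : (s : Set ι) => v i) A B)
    {g : E} (hg : g ∈ span ℂ (v '' s)) :
    A * ‖g‖ ^ 2 ≤ ∑ i ∈ s, ‖⟪g, v i⟫‖ ^ 2 ∧ ∑ i ∈ s, ‖⟪g, v i⟫‖ ^ 2 ≤ B * ‖g‖ ^ 2 := by
  rw [Set.image_eq_range, ← closedSpan_eq_span_of_finite (Set.finite_range _)] at hg
  obtain ⟨-, hA, hB⟩ := h.2 g hg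
  simp only [tsum_fintype, Finset.sum_finset_coe (fun i => ‖⟪g, v i⟫‖ ^ 2) s] at hA hB
  exact ⟨hA, hB⟩

lemma isFrameSequence_subfamily (hfr : ∀ Γ : Set ι, IsFrameSequence (fun i : Γ => v i) A B)
    (Δ : Set ι) (Γ : Set Δ) : IsFrameSequence (fun i : Γ => v i.1.1) A B :=
  (hfr (Subtype.val '' Γ)).comp_equiv (Equiv.Set.image _ Γ Subtype.val_injective)

lemma riesz_bounds_of_linearIndependent (hli : LinearIndependent ℂ v)
    (hfr : ∀ Γ : Set ι, IsFrameSequence (fun i : Γ => v i) A B) (a : ι →₀ ℂ) :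
    √A * √(∑ i ∈ a.support, ‖a i‖ ^ 2) ≤ ‖∑ i ∈ a.support, a i • v i‖ ∧
      ‖∑ i ∈ a.support, a i • v i‖ ≤ √B * √(∑ i ∈ a.support, ‖a i‖ ^ 2) :=
  ⟨le_norm_sum_smul (hli.linearIndepOn _) (fun _ hg => ((hfr _).bounds_of_finset hg).1) a,
    norm_sum_smul_le (fun _ hg => ((hfr _).bounds_of_finset hg).2) a⟩

end Frames

/-- **Corollary 2.2 (Christensen).** Every Riesz frame contains a Riesz basis. -/
theorem riesz_frame_contains_riesz_basis (f : ℕ → H) (hf : IsRieszFrame f) :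
    ∃ Δ : Set ℕ, IsRieszBasis (fun i : Δ => f i) := by
  obtain ⟨A, B, hA, hB, htop, hfr⟩ := hf
  obtain ⟨Δ, -, -, hspan, hli⟩ :=
    exists_linearIndepOn_extension (linearIndepOn_empty ℂ f) (Set.empty_subset Set.univ)
  refine ⟨Δ, ?_, √A, √B, Real.sqrt_pos.2 hA, Real.sqrt_pos.2 hB,
    riesz_bounds_of_linearIndependent hli (isFrameSequence_subfamily hfr Δ)⟩
  rw [eq_top_iff, ← htop, ← Set.image_eq_range]
  exact topologicalClosure_mono (span_le.2 (by simpa using hspan))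

end
end

section
/- Let (f_i)_{i=1}^∞ be a frame for a Hilbert space H with frame bounds A, B. Let Δ ⊆ ℕ and let P be the orthogonal projection of H onto the closed linear span of (f_i)_{i∈Δ}. Then ((I − P)f_i)_{i∈Δᶜ} is a frame for its closed linear span (which equals (I − P)(H)) with frame bounds A, B. -/
/-! Let `K` be the closed span of `(f i)_{i ∈ Δ}`, so that `I - P` is the orthogonal projection
onto `Kᗮ`. For `h ∈ Kᗮ` one has `⟪h, (I - P) f i⟫ = ⟪h, f i⟫`, which vanishes for `i ∈ Δ`; hence the
frame sums of `((I - P) f i)_{i ∈ Δᶜ}` on `Kᗮ` are those of `f`, and the bounds carry over. A vector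
of `Kᗮ` orthogonal to every `(I - P) f i` is then orthogonal to every `f i`, so it is zero by the
lower frame bound: the projected vectors span `Kᗮ`. -/

open scoped ComplexInnerProductSpace
open Submodule Filter

variable {H : Type*} [NormedAddCommGroup H] [InnerProductSpace ℂ H]

theorem subset_closedSpan (s : Set H) : s ⊆ closedSpan s :=
  subset_span.trans (le_topologicalClosure _)

namespace IsFrameFor

variable {ι : Type*} {f : ι → H} {K L : Submodule ℂ H} {A B : ℝ}

theorem starProjection (hf : IsFrameFor f L A B) (hKL : K ≤ L) [K.HasOrthogonalProjection] :
    IsFrameFor (fun i => K.starProjection (f i)) K A B := by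
  refine ⟨fun i => K.starProjection_apply_mem (f i), fun h hh => ?_⟩
  have hinner : ∀ i, ⟪h, K.starProjection (f i)⟫ = ⟪h, f i⟫ := fun i => by
    rw [← inner_starProjection_left_eq_right, starProjection_eq_self_iff.mpr hh]
  simp only [hinner]
  exact hf.2 h (hKL hh)

theorem subtype_of_eq_zero (hf : IsFrameFor f K A B) {s : Set ι} (hs : ∀ i ∉ s, f i = 0) :
    IsFrameFor (fun i : s => f i) K A B := by
  refine ⟨fun i => hf.1 i, fun h hh => ?_⟩
  obtain ⟨hsum, hlower, hupper⟩ := hf.2 h hh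
  have hsupp : Function.support (fun i => ‖⟪h, f i⟫‖ ^ 2) ⊆ s := fun i hi => by
    by_contra his
    simp [hs i his] at hi
  rw [tsum_subtype_eq_of_support_subset hsupp]
  exact ⟨hsum.subtype s, hlower, hupper⟩

theorem eq_zero_of_forall_inner_eq_zero (hf : IsFrameFor f K A B) (hA : 0 < A) {h : H}
    (hh : h ∈ K) (h0 : ∀ i, ⟪h, f i⟫ = 0) : h = 0 := by
  have hlower : A * ‖h‖ ^ 2 ≤ 0 := by simpa [h0] using (hf.2 h hh).2.1
  simpa using nonpos_of_mul_nonpos_right hlower hA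

end IsFrameFor

variable [CompleteSpace H]

instance completeSpace_closedSpan (s : Set H) : CompleteSpace (closedSpan s) :=
  (isClosed_topologicalClosure _).completeSpace_coe

theorem projSpan_eq_starProjection (s : Set H) : projSpan s = (closedSpan s).starProjection :=
  rfl

theorem sub_projSpan_apply (s : Set H) (v : H) :
    v - projSpan s v = (closedSpan s)ᗮ.starProjection v := by
  rw [starProjection_orthogonal_val, projSpan_eq_starProjection]

theorem IsFrameFor.closedSpan_range_eq {ι : Type*} {f : ι → H} {K : Submodule ℂ H} {A B : ℝ}
    (hf : IsFrameFor f K A B) (hA : 0 < A) (hK : IsClosed (K : Set H)) :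
    closedSpan (Set.range f) = K := by
  set M := closedSpan (Set.range f)
  have hMK : M ≤ K := topologicalClosure_minimal _ (span_le.2 (Set.range_subset_iff.2 hf.1)) hK
  have hbot : Mᗮ ⊓ K = ⊥ := eq_bot_iff.2 fun h ⟨hM, hh⟩ =>
    (mem_bot ℂ).2 <| hf.eq_zero_of_forall_inner_eq_zero hA hh fun i =>
      (mem_orthogonal' M h).1 hM (f i) (subset_closedSpan _ ⟨i, rfl⟩)
  simpa [hbot] using sup_orthogonal_inf_of_hasOrthogonalProjection hMK

theorem projected_complement_is_frame_sequence_general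
    (f : ℕ → H) (A B : ℝ) (hA : 0 < A)
    (hf : IsFrameFor f (⊤ : Submodule ℂ H) A B) (Δ : Set ℕ) :
    closedSpan (Set.range (fun i : ↥Δᶜ => f i - projSpan (f '' Δ) (f i)))
        = (closedSpan (f '' Δ))ᗮ ∧
    IsFrameFor (fun i : ↥Δᶜ => f i - projSpan (f '' Δ) (f i))
      (closedSpan (f '' Δ))ᗮ A B := by
  set K := (closedSpan (f '' Δ))ᗮ
  have hframe : IsFrameFor (fun i : ↥Δᶜ => f i - projSpan (f '' Δ) (f i)) K A B := by
    simp only [sub_projSpan_apply]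
    exact (hf.starProjection le_top).subtype_of_eq_zero fun i hi =>
      starProjection_orthogonal_apply_eq_zero (subset_closedSpan _ ⟨i, not_not.1 hi, rfl⟩)
  exact ⟨hframe.closedSpan_range_eq hA (isClosed_orthogonal _), hframe⟩

/-- **Proposition 2.3 (2).** If `f` is a frame for `H` with bounds `A, B`, `Δ ⊆ ℕ` and `P` is the
orthogonal projection onto the closed span of `(f i)_{i ∈ Δ}`, then `((I - P) f i)_{i ∈ Δᶜ}` is a
frame for its closed linear span — which equals `Kᗮ = (I - P)(H)` — with frame bounds `A, B`. -/
theorem projected_complement_is_frame_sequence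
    (f : ℕ → H) (A B : ℝ) (hA : 0 < A) (hB : 0 < B)
    (hf : IsFrameFor f (⊤ : Submodule ℂ H) A B) (Δ : Set ℕ) :
    closedSpan (Set.range (fun i : ↥Δᶜ => f i - projSpan (f '' Δ) (f i)))
        = (closedSpan (f '' Δ))ᗮ ∧
    IsFrameFor (fun i : ↥Δᶜ => f i - projSpan (f '' Δ) (f i))
      (closedSpan (f '' Δ))ᗮ A B :=
  projected_complement_is_frame_sequence_general f A B hA hf Δ
end

section
/- Let (f_i)_{i=1}^∞ be a Riesz frame for a Hilbert space H with Riesz frame bounds A, B, and suppose a subfamily (g_i)_{i=1}^∞ of the frame is an orthonormal basis of H; let (h_i)_{i∈Γ} be the remaining elements of the frame. Then every nonzero coordinate of each h_i satisfies A ≤ |⟨h_i, g_j⟩|² ≤ B, and consequently there is a natural number k (one may take k = ⌊B/A⌋) such that each h_i has at most k nonzero coordinates |{j : ⟨h_i, g_j⟩ ≠ 0}| ≤ k. -/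
open scoped ComplexInnerProductSpace
open Submodule Filter

noncomputable section

variable {H : Type*} [NormedAddCommGroup H] [InnerProductSpace ℂ H] [CompleteSpace H]

/-!
If `c = ⟪f j, f i⟫ ≠ 0` for a basis vector `f j` and a remaining vector `f i`, then `c • f j` is
`f i` minus its expansion in the other basis vectors, so it lies in the closed span of the
subfamily `{f i} ∪ (basis \ {f j})`, where it is orthogonal to everything but `f i`. The lower
Riesz frame bound of that subfamily reads `A |c|² ≤ |c|⁴`. The upper bound is Cauchy–Schwarz
together with `‖f i‖² ≤ B`, and Bessel's inequality `∑ⱼ |⟪f j, f i⟫|² ≤ ‖f i‖² ≤ B`, each nonzero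
term being at least `A`, leaves room for at most `B / A` nonzero coordinates.
-/

open scoped InnerProductSpace

theorem Orthonormal.ncard_inner_ne_zero_le {𝕜 E ι : Type*} [RCLike 𝕜] [NormedAddCommGroup E]
    [InnerProductSpace 𝕜 E] {v : ι → E} (hv : Orthonormal 𝕜 v) (x : E) {A : ℝ} (hA : 0 < A)
    (hcoord : ∀ j, ⟪v j, x⟫_𝕜 ≠ 0 → A ≤ ‖⟪v j, x⟫_𝕜‖ ^ 2) :
    {j | ⟪v j, x⟫_𝕜 ≠ 0}.Finite ∧ {j | ⟪v j, x⟫_𝕜 ≠ 0}.ncard ≤ ⌊‖x‖ ^ 2 / A⌋₊ := by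
  set s := {j | ⟪v j, x⟫_𝕜 ≠ 0}
  have hsum := hv.inner_products_summable x
  have hfin : s.Finite :=
    (eventually_cofinite.1 (hsum.tendsto_cofinite_zero.eventually (gt_mem_nhds hA))).subset
      fun j hj => not_lt.2 (hcoord j hj)
  refine ⟨hfin, Nat.le_floor ((le_div_iff₀ hA).2 ?_)⟩
  calc (s.ncard : ℝ) * A = ∑ _j ∈ hfin.toFinset, A := by simp [Set.ncard_eq_toFinset_card s hfin]
    _ ≤ ∑ j ∈ hfin.toFinset, ‖⟪v j, x⟫_𝕜‖ ^ 2 :=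
      Finset.sum_le_sum fun j hj => hcoord j (hfin.mem_toFinset.1 hj)
    _ ≤ ∑' j, ‖⟪v j, x⟫_𝕜‖ ^ 2 := hsum.sum_le_tsum _ fun _ _ => sq_nonneg _
    _ ≤ ‖x‖ ^ 2 := hv.tsum_inner_products_le x

section

variable {E ι : Type*} [NormedAddCommGroup E] [InnerProductSpace ℂ E] {f : ι → E} {A B : ℝ}

namespace IsFrameFor

variable {K : Submodule ℂ E} {g : E}

theorem norm_inner_sq_le (hf : IsFrameFor f K A B) (hg : g ∈ K) (k : ι) :
    ‖⟪g, f k⟫‖ ^ 2 ≤ B * ‖g‖ ^ 2 :=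
  let ⟨hsum, _, hle⟩ := hf.2 g hg
  (hsum.le_tsum k fun _ _ => sq_nonneg _).trans hle

theorem mul_norm_sq_le_of_inner_eq_zero (hf : IsFrameFor f K A B) (hg : g ∈ K) {k₀ : ι}
    (horth : ∀ k ≠ k₀, ⟪g, f k⟫ = 0) : A * ‖g‖ ^ 2 ≤ ‖⟪g, f k₀⟫‖ ^ 2 := by
  obtain ⟨-, hle, -⟩ := hf.2 g hg
  rwa [tsum_eq_single k₀ fun k hk => by simp [horth k hk]] at hle

end IsFrameFor

theorem IsFrameSequence.norm_sq_le (hf : IsFrameSequence f A B) (hB : 0 ≤ B) (k : ι) :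
    ‖f k‖ ^ 2 ≤ B := by
  have hmem : f k ∈ closedSpan (Set.range f) :=
    le_topologicalClosure _ (subset_span ⟨k, rfl⟩)
  have h := IsFrameFor.norm_inner_sq_le hf hmem k
  rw [← inner_self_re_eq_norm, inner_self_eq_norm_sq] at h
  rcases (sq_nonneg ‖f k‖).eq_or_lt with h0 | hpos
  · exact h0 ▸ hB
  · exact le_of_mul_le_mul_right ((sq _).symm.trans_le h) hpos

theorem sub_inner_smul_mem_closedSpan_diff [CompleteSpace E] {S : Set ι}
    (hON : Orthonormal ℂ (fun l : S => f l)) (htotal : closedSpan (f '' S) = ⊤) (x : E)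
    {j : ι} (hj : j ∈ S) : x - ⟪f j, x⟫ • f j ∈ closedSpan (f '' (S \ {j})) := by
  classical
  have hdense : ⊤ ≤ (span ℂ (Set.range fun l : S => f l)).topologicalClosure := by
    rw [← Set.image_eq_range]; exact htotal.ge
  set b := HilbertBasis.mk hON hdense
  have hsum : HasSum (Function.update (fun l : S => ⟪f l, x⟫ • f l) ⟨j, hj⟩ 0)
      (x - ⟪f j, x⟫ • f j) := by
    simpa [b, b.repr_apply_apply, HilbertBasis.coe_mk, sub_eq_neg_add] using
      (b.hasSum_repr x).update ⟨j, hj⟩ 0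
  refine mem_closure_of_tendsto hsum (Eventually.of_forall fun s => sum_mem fun l _ => ?_)
  by_cases hl : l = ⟨j, hj⟩
  · simp [hl]
  · rw [Function.update_of_ne hl]
    exact smul_mem _ _ (subset_span ⟨l, ⟨l.2, fun h => hl (Subtype.ext h)⟩, rfl⟩)

theorem IsRieszFrameWith.le_norm_inner_sq [CompleteSpace E] (hf : IsRieszFrameWith f A B)
    {S : Set ι} (hON : Orthonormal ℂ (fun l : S => f l)) (htotal : closedSpan (f '' S) = ⊤)
    {i j : ι} (hi : i ∉ S) (hj : j ∈ S) (hne : ⟪f j, f i⟫ ≠ 0) : A ≤ ‖⟪f j, f i⟫‖ ^ 2 := by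
  set c := ⟪f j, f i⟫
  set Δ : Set ι := insert i (S \ {j})
  have hmem : c • f j ∈ closedSpan (Set.range fun k : Δ => f k) := by
    rw [← Set.image_eq_range]
    have hfi : f i ∈ closedSpan (f '' Δ) :=
      le_topologicalClosure _ (subset_span ⟨i, Set.mem_insert i _, rfl⟩)
    have hrest : closedSpan (f '' (S \ {j})) ≤ closedSpan (f '' Δ) :=
      topologicalClosure_mono (span_mono (Set.image_mono (Set.subset_insert i _)))
    simpa [c] using sub_mem hfi (hrest (sub_inner_smul_mem_closedSpan_diff hON htotal (f i) hj))
  have horth : ∀ k : Δ, k ≠ ⟨i, Set.mem_insert i _⟩ → ⟪c • f j, f k⟫ = 0 := by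
    rintro ⟨k, rfl | ⟨hkS, hkj⟩⟩ hk
    · exact absurd rfl hk
    · have hjk : (⟨j, hj⟩ : S) ≠ ⟨k, hkS⟩ := fun h => hkj (congrArg Subtype.val h).symm
      rw [inner_smul_left, hON.inner_eq_zero hjk, mul_zero]
  have h := IsFrameFor.mul_norm_sq_le_of_inner_eq_zero (hf.2 Δ) hmem horth
  rw [norm_smul, hON.1 ⟨j, hj⟩, mul_one, inner_smul_left, norm_mul, RCLike.norm_conj] at h
  exact le_of_mul_le_mul_right (h.trans_eq (by ring)) (by positivity)

end

/-- **Theorem 2.4 ("moreover" part).** If `f` is a Riesz frame with Riesz frame bounds `A, B`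
and the subfamily `(f i)_{i ∈ Δg}` is an orthonormal basis of `H`, then every nonzero coordinate
of each remaining frame element satisfies `A ≤ |⟨h_i, g_j⟩|² ≤ B`, and consequently each remaining
element has at most `k = ⌊B / A⌋` nonzero coordinates. -/
theorem riesz_frame_coordinates_bounded
    (f : ℕ → H) (A B : ℝ) (hA : 0 < A) (hB : 0 < B)
    (hf : IsRieszFrameWith f A B)
    (Δg : Set ℕ)
    (hON : Orthonormal ℂ (fun i : Δg => f i))
    (htotal : closedSpan (f '' Δg) = ⊤) :
    (∀ i ∈ Δgᶜ, ∀ j ∈ Δg, ⟪f i, f j⟫ ≠ 0 →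
        A ≤ ‖⟪f i, f j⟫‖ ^ 2 ∧ ‖⟪f i, f j⟫‖ ^ 2 ≤ B) ∧
    (∀ i ∈ Δgᶜ, {j | j ∈ Δg ∧ ⟪f i, f j⟫ ≠ 0}.Finite ∧
        {j | j ∈ Δg ∧ ⟪f i, f j⟫ ≠ 0}.ncard ≤ ⌊B / A⌋₊) := by
  have hnorm (i : ℕ) : ‖f i‖ ^ 2 ≤ B := (hf.2 Set.univ).norm_sq_le hB.le ⟨i, trivial⟩
  have hlower {i j : ℕ} (hi : i ∈ Δgᶜ) (hj : j ∈ Δg) (hne : ⟪f j, f i⟫ ≠ 0) :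
      A ≤ ‖⟪f j, f i⟫‖ ^ 2 :=
    hf.le_norm_inner_sq hON htotal hi hj hne
  refine ⟨fun i hi j hj hne => ⟨?_, ?_⟩, fun i hi => ?_⟩
  · rw [norm_inner_symm]
    exact hlower hi hj (inner_eq_zero_symm.not.1 hne)
  · calc ‖⟪f i, f j⟫‖ ^ 2 ≤ ‖f i‖ ^ 2 := by
          gcongr; simpa [hON.1 ⟨j, hj⟩] using norm_inner_le_norm (f i) (f j)
      _ ≤ B := hnorm i
  · obtain ⟨hfin, hcard⟩ := hON.ncard_inner_ne_zero_le (f i) hA fun l hl => hlower hi l.2 hl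
    have hset : {j | j ∈ Δg ∧ ⟪f i, f j⟫ ≠ 0} = Subtype.val '' {l : Δg | ⟪f l, f i⟫ ≠ 0} := by
      ext j
      simp [inner_eq_zero_symm, and_comm]
    rw [hset, Set.ncard_image_of_injective _ Subtype.val_injective]
    exact ⟨hfin.image _,
      hcard.trans (Nat.floor_le_floor (div_le_div_of_nonneg_right (hnorm i) hA.le))⟩

end
end

section
/- Let (f_i)_{i=1}^∞ be a frame for a Hilbert space H with the subframe property, suppose a subfamily (g_i)_{i=1}^∞ of the frame is an orthonormal basis for H, and let (h_i)_{i∈Γ} be those remaining frame elements having finite support with respect to (g_i). Then there exist a natural number m and constants A, B > 0 such that for all i ∈ Γ and all j ≥ m with ⟨h_i, g_j⟩ ≠ 0, one has A ≤ |⟨h_i, g_j⟩| ≤ B. -/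
open scoped ComplexInnerProductSpace
open Submodule Filter

noncomputable section

variable {H : Type*} [NormedAddCommGroup H] [InnerProductSpace ℂ H] [CompleteSpace H]

/-!
The upper bound holds because `⟨h, g_n⟩` is a frame coefficient of the unit vector `g_n`, so its
square is at most the frame bound `B`.

For the lower bound, suppose finitely supported elements have arbitrarily small nonzero
coordinates arbitrarily far out. Since every column `i ↦ ⟨f_i, g_n⟩` of frame coefficients is
square summable, one can extract rows `h_m` and columns `ν m` such that `⟨h_m, g_{ν l}⟩` vanishes for
`m < l`, is nonzero for `m = l` and has modulus below `2^{-m}` for `l ≤ m`. Let `Δ` consist of these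
rows together with the basis vectors `g_n`, `n ∉ range ν`. Triangularity puts every `g_{ν m}` in the
closed span of `(f_i)_{i ∈ Δ}`, while the frame coefficients of `g_{ν m}` with respect to this
subfamily have square sum at most `2 · 2^{-m}`. This contradicts the positive lower frame bound of
`(f_i)_{i ∈ Δ}` given by the subframe property.
-/

open scoped InnerProductSpace

theorem Submodule.mem_of_sum_smul_mem {R M ι : Type*} [DivisionRing R] [AddCommGroup M]
    [Module R M] (p : Submodule R M) {s : Finset ι} {c : ι → R} {v : ι → M} {i : ι} (hi : i ∈ s)
    (hc : c i ≠ 0) (hsum : ∑ j ∈ s, c j • v j ∈ p) (hv : ∀ j ∈ s, j ≠ i → v j ∈ p) : v i ∈ p := by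
  classical
  rw [← Finset.add_sum_erase s _ hi, p.add_mem_iff_left (p.sum_mem fun j hj =>
    p.smul_mem _ (hv j (Finset.mem_of_mem_erase hj) (Finset.ne_of_mem_erase hj)))] at hsum
  exact (p.smul_mem_iff hc).mp hsum

section HilbertBasis

variable {ι 𝕜 E : Type*} [RCLike 𝕜] [NormedAddCommGroup E] [InnerProductSpace 𝕜 E]

theorem HilbertBasis.sum_inner_smul_eq (b : HilbertBasis ι 𝕜 E) {x : E} {s : Finset ι}
    (hs : ∀ i ∉ s, ⟪b i, x⟫_𝕜 = 0) : ∑ i ∈ s, ⟪b i, x⟫_𝕜 • b i = x :=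
  (hasSum_sum_of_ne_finset_zero fun i hi => by rw [hs i hi, zero_smul]).unique
    (by simpa only [b.repr_apply_apply] using b.hasSum_repr x)

theorem HilbertBasis.mem_of_lowerTriangular (b : HilbertBasis ι 𝕜 E) {p : Submodule 𝕜 E}
    {x : ℕ → E} {ν : ℕ → ι} (hx : ∀ m, x m ∈ p) (hb : ∀ i ∉ Set.range ν, b i ∈ p)
    (hfin : ∀ m, {i | ⟪x m, b i⟫_𝕜 ≠ 0}.Finite)
    (hzero : ∀ m l, m < l → ⟪x m, b (ν l)⟫_𝕜 = 0) (hdiag : ∀ m, ⟪x m, b (ν m)⟫_𝕜 ≠ 0) (m : ℕ) :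
    b (ν m) ∈ p := by
  induction m using Nat.strong_induction_on with
  | _ m ih =>
    have hsupp : ∀ i, i ∈ (hfin m).toFinset ↔ ⟪b i, x m⟫_𝕜 ≠ 0 := fun i =>
      (Set.Finite.mem_toFinset _).trans (not_congr inner_eq_zero_symm)
    have hdiag' : ⟪b (ν m), x m⟫_𝕜 ≠ 0 := fun h => hdiag m (inner_eq_zero_symm.1 h)
    refine p.mem_of_sum_smul_mem (c := fun i => ⟪b i, x m⟫_𝕜) ((hsupp _).2 hdiag') hdiag' ?_
      fun i hi him => ?_
    · rw [b.sum_inner_smul_eq fun i hi => not_not.1 (mt (hsupp i).2 hi)]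
      exact hx m
    by_cases hν : i ∈ Set.range ν
    · obtain ⟨l, rfl⟩ := hν
      rcases lt_trichotomy l m with hlm | rfl | hml
      · exact ih l hlm
      · exact absurd rfl him
      · exact absurd (inner_eq_zero_symm.1 (hzero m l hml)) ((hsupp _).1 hi)
    · exact hb i hν

end HilbertBasis

theorem tsum_norm_sq_le_of_norm_le_geometric {E : Type*} [SeminormedAddCommGroup E] {a : ℕ → E}
    {m : ℕ} (hzero : ∀ k < m, a k = 0) (hle : ∀ k ≥ m, ‖a k‖ ≤ (1 / 2) ^ k) :
    ∑' k, ‖a k‖ ^ 2 ≤ 2 * (1 / 2) ^ m := by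
  have hbound : ∀ k, ‖a k‖ ^ 2 ≤ (1 / 2) ^ m * (1 / 2) ^ k := by
    intro k
    rcases lt_or_ge k m with hk | hk
    · rw [hzero k hk, norm_zero, zero_pow two_ne_zero]
      positivity
    · calc ‖a k‖ ^ 2 ≤ ((1 / 2) ^ k) ^ 2 := pow_le_pow_left₀ (norm_nonneg _) (hle k hk) 2
        _ = (1 / 2) ^ k * (1 / 2) ^ k := sq _
        _ ≤ (1 / 2) ^ m * (1 / 2) ^ k := mul_le_mul_of_nonneg_right
          (pow_le_pow_of_le_one (by norm_num) (by norm_num) hk) (by positivity)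
  have hgeom := summable_geometric_two.mul_left ((1 / 2 : ℝ) ^ m)
  calc ∑' k, ‖a k‖ ^ 2 ≤ ∑' k, (1 / 2 : ℝ) ^ m * (1 / 2) ^ k :=
        (hgeom.of_nonneg_of_le (fun _ => sq_nonneg _) hbound).tsum_le_tsum hbound hgeom
    _ = 2 * (1 / 2) ^ m := by rw [tsum_mul_left, tsum_geometric_two, mul_comm]

section LowerTriangular

variable {ι E : Type*} [NormedAddCommGroup E] {c : ι → ℕ → E}

theorem exists_row_small_before
    (hcol : ∀ n, Tendsto (fun i => c i n) cofinite (nhds 0))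
    (hsmall : ∀ (M : ℕ) (ε : ℝ), 0 < ε →
      ∃ i, {n | c i n ≠ 0}.Finite ∧ ∃ n ≥ M, c i n ≠ 0 ∧ ‖c i n‖ < ε)
    (M : ℕ) {ε : ℝ} (hε : 0 < ε) :
    ∃ i n M', M ≤ n ∧ n < M' ∧ c i n ≠ 0 ∧ ‖c i n‖ < ε ∧ (∀ k < M, ‖c i k‖ < ε) ∧
      ∀ k ≥ M', c i k = 0 := by
  set F := {i | ∃ k < M, ε ≤ ‖c i k‖}
  have hF : F.Finite := by
    refine ((Set.finite_Iio M).biUnion fun k _ =>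
      (mem_cofinite.1 (hcol k (Metric.ball_mem_nhds 0 hε)))).subset ?_
    rintro i ⟨k, hk, hle⟩
    exact Set.mem_biUnion hk (by simpa using hle)
  -- `N` bounds the supports of the finitely many finitely supported rows that are large before `M`.
  obtain ⟨N, hN⟩ := ((hF.inter_of_left {i | {n | c i n ≠ 0}.Finite}).biUnion
    fun i hi => hi.2).bddAbove
  obtain ⟨i, hfin, n, hn, hne, hlt⟩ := hsmall (max M (N + 1)) ε hε
  have hiF : i ∉ F := fun hiF => by
    have := hN (Set.mem_biUnion ⟨hiF, hfin⟩ hne)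
    omega
  obtain ⟨N', hN'⟩ := hfin.bddAbove
  refine ⟨i, n, N' + 1, le_of_max_le_left hn, Nat.lt_succ_of_le (hN' hne), hne, hlt,
    fun k hk => not_le.1 fun h => hiF ⟨k, hk, h⟩, fun k hk => by_contra fun h => ?_⟩
  have := hN' h
  omega

theorem exists_lowerTriangular_submatrix
    (hrow : ∀ (M : ℕ) (ε : ℝ), 0 < ε → ∃ i n M', M ≤ n ∧ n < M' ∧ c i n ≠ 0 ∧ ‖c i n‖ < ε ∧
      (∀ k < M, ‖c i k‖ < ε) ∧ ∀ k ≥ M', c i k = 0) :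
    ∃ (I : ℕ → ι) (ν : ℕ → ℕ), (∀ m, {n | c (I m) n ≠ 0}.Finite) ∧
      (∀ m l, m < l → c (I m) (ν l) = 0) ∧ (∀ m, c (I m) (ν m) ≠ 0) ∧
      ∀ m l, l ≤ m → ‖c (I m) (ν l)‖ < (1 / 2) ^ m := by
  choose i n M' hMn hnM' hne hlt hsmall hzero using
    fun M k => hrow M ((1 / 2 : ℝ) ^ k) (by positivity)
  -- Row `k` is chosen small on the columns below `T k`, which bounds the supports of earlier rows.
  let T : ℕ → ℕ := fun k => Nat.rec 0 (fun k Tk => M' Tk k) k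
  have hT : Monotone T := monotone_nat_of_le_succ fun k => (hMn (T k) k).trans (hnM' _ _).le
  refine ⟨fun k => i (T k) k, fun k => n (T k) k,
    fun k => (Set.finite_lt_nat (M' (T k) k)).subset fun j hj => not_le.1 fun h => hj (hzero _ _ j h),
    fun k l hkl => hzero _ _ _ ((hT hkl).trans (hMn _ _)), fun k => hne _ _, fun k l hlk => ?_⟩
  rcases hlk.eq_or_lt with rfl | hlk
  · exact hlt _ _
  · exact hsmall _ _ _ ((hnM' _ _).trans_le (hT hlk))

end LowerTriangular

section Frame

variable {ι κ E : Type*} [NormedAddCommGroup E] [InnerProductSpace ℂ E] {f : ι → E}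

theorem IsFrameFor.norm_inner_le {K : Submodule ℂ E} {A B : ℝ} (hf : IsFrameFor f K A B)
    {x : E} (hx : x ∈ K) (i : ι) : ‖⟪x, f i⟫‖ ≤ √B * ‖x‖ := by
  obtain ⟨hs, -, hle⟩ := hf.2 x hx
  calc ‖⟪x, f i⟫‖ = √(‖⟪x, f i⟫‖ ^ 2) := (Real.sqrt_sq (norm_nonneg _)).symm
    _ ≤ √(B * ‖x‖ ^ 2) := Real.sqrt_le_sqrt ((hs.le_tsum i fun j _ => sq_nonneg _).trans hle)
    _ = √B * ‖x‖ := by rw [Real.sqrt_mul' _ (sq_nonneg _), Real.sqrt_sq (norm_nonneg _)]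

theorem IsFrameFor.tendsto_inner_cofinite {K : Submodule ℂ E} {A B : ℝ}
    (hf : IsFrameFor f K A B) {x : E} (hx : x ∈ K) :
    Tendsto (fun i => ⟪f i, x⟫) cofinite (nhds 0) := by
  rw [tendsto_zero_iff_norm_tendsto_zero]
  simpa [norm_inner_symm x] using (hf.2 x hx).1.tendsto_cofinite_zero.sqrt

theorem HasSubframeProperty.false_of_lowerTriangular (hsub : HasSubframeProperty f)
    (b : HilbertBasis κ ℂ E) {e : κ → ι} (hfe : ∀ n, f (e n) = b n) {I : ℕ → ι} {ν : ℕ → κ}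
    (hfin : ∀ m, {n | ⟪f (I m), b n⟫ ≠ 0}.Finite)
    (hzero : ∀ m l, m < l → ⟪f (I m), b (ν l)⟫ = 0) (hdiag : ∀ m, ⟪f (I m), b (ν m)⟫ ≠ 0)
    (hsmall : ∀ m l, l ≤ m → ‖⟪f (I m), b (ν l)⟫‖ < (1 / 2) ^ m) : False := by
  set Δ : Set ι := Set.range I ∪ e '' (Set.range ν)ᶜ
  obtain ⟨A, B, hA, -, hΔ⟩ := hsub Δ
  have hmemΔ : ∀ δ ∈ Δ, f δ ∈ closedSpan (Set.range fun δ : Δ => f δ) := fun δ hδ =>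
    le_topologicalClosure _ (subset_span ⟨⟨δ, hδ⟩, rfl⟩)
  have hmem : ∀ m, b (ν m) ∈ closedSpan (Set.range fun δ : Δ => f δ) :=
    b.mem_of_lowerTriangular (fun m => hmemΔ _ (.inl ⟨m, rfl⟩))
      (fun n hn => hfe n ▸ hmemΔ _ (.inr (Set.mem_image_of_mem e hn))) hfin hzero hdiag
  let φ : ℕ → Δ := fun m => ⟨I m, .inl ⟨m, rfl⟩⟩
  have hφ : Function.Injective φ := Function.Injective.of_lt_imp_ne fun m l hml h =>
    hdiag l (by rw [← show I m = I l from congrArg Subtype.val h]; exact hzero m l hml)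
  have hsupp : ∀ m, Function.support (fun δ : Δ => ‖⟪b (ν m), f δ⟫‖ ^ 2) ⊆ Set.range φ := by
    rintro m ⟨δ, ⟨k, rfl⟩ | ⟨n, hn, rfl⟩⟩ hδ
    · exact ⟨k, rfl⟩
    · exact absurd (by simp [hfe, b.orthonormal.2 fun h => hn ⟨m, h⟩]) hδ
  have hbound : ∀ m, A ≤ 2 * (1 / 2) ^ m := fun m => calc
    A = A * ‖b (ν m)‖ ^ 2 := by rw [b.orthonormal.1, one_pow, mul_one]
    _ ≤ ∑' δ : Δ, ‖⟪b (ν m), f δ⟫‖ ^ 2 := (hΔ.2 _ (hmem m)).2.1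
    _ = ∑' k, ‖⟪b (ν m), f (I k)⟫‖ ^ 2 := (hφ.tsum_eq (hsupp m)).symm
    _ ≤ 2 * (1 / 2) ^ m := tsum_norm_sq_le_of_norm_le_geometric
        (fun k hk => inner_eq_zero_symm.1 (hzero k m hk))
        fun k hk => (norm_inner_symm _ _).trans_le (hsmall k m hk).le
  have hlim : Tendsto (fun m : ℕ => 2 * (1 / 2 : ℝ) ^ m) atTop (nhds 0) := by
    simpa using (tendsto_pow_atTop_nhds_zero_of_lt_one (r := (1 / 2 : ℝ)) (by norm_num)
      (by norm_num)).const_mul 2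
  exact (ge_of_tendsto' hlim hbound).not_gt hA

end Frame

theorem finite_support_coordinates_eventually_bounded_general
    (f : ℕ → H) (A B : ℝ) (hB : 0 < B)
    (hf : IsFrameFor f (⊤ : Submodule ℂ H) A B)
    (hsub : HasSubframeProperty f)
    (Δg : Set ℕ) (e : ℕ ≃ Δg)
    (hON : Orthonormal ℂ (fun n => f (e n)))
    (htotal : closedSpan (Set.range fun n => f (e n)) = ⊤) :
    ∃ (m : ℕ) (A' B' : ℝ), 0 < A' ∧ 0 < B' ∧
      ∀ i : ℕ, i ∉ Δg → {n : ℕ | ⟪f i, f (e n)⟫ ≠ 0}.Finite →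
        ∀ n ≥ m, ⟪f i, f (e n)⟫ ≠ 0 →
          A' ≤ ‖⟪f i, f (e n)⟫‖ ∧ ‖⟪f i, f (e n)⟫‖ ≤ B' := by
  obtain ⟨b, hb⟩ : ∃ b : HilbertBasis ℕ ℂ H, ⇑b = fun n => f (e n) :=
    ⟨_, HilbertBasis.coe_mk hON htotal.ge⟩
  have hfe : ∀ n, f (e n) = b n := fun n => (congrFun hb n).symm
  obtain ⟨m, A', hA', hlow⟩ : ∃ (m : ℕ) (A' : ℝ), 0 < A' ∧ ∀ i : ℕ, {n | ⟪f i, b n⟫ ≠ 0}.Finite →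
      ∀ n ≥ m, ⟪f i, b n⟫ ≠ 0 → A' ≤ ‖⟪f i, b n⟫‖ := by
    by_contra! hbad
    obtain ⟨I, ν, hfin, hzero, hdiag, hsmall⟩ := exists_lowerTriangular_submatrix
      (exists_row_small_before (fun n => hf.tendsto_inner_cofinite trivial) hbad)
    exact hsub.false_of_lowerTriangular b hfe hfin hzero hdiag hsmall
  refine ⟨m, A', √B, hA', Real.sqrt_pos.2 hB, fun i _ hfin n hn hne => ?_⟩
  simp only [hfe] at hfin hne ⊢
  refine ⟨hlow i hfin n hn hne, ?_⟩
  simpa [norm_inner_symm, b.orthonormal.1 n] using hf.norm_inner_le trivial i (x := b n)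

/-- **Theorem 3.2, Step II.** Let `f` be a frame with the subframe property whose subfamily
`(g n) = (f (e n))` is an orthonormal basis of `H`, and consider the remaining frame elements
of finite support with respect to `(g n)`.  Then there are `m ∈ ℕ` and `A', B' > 0` such that
all their nonzero coordinates past `m` satisfy `A' ≤ |⟨h i, g n⟩| ≤ B'`. -/
theorem finite_support_coordinates_eventually_bounded
    (f : ℕ → H) (A B : ℝ) (hA : 0 < A) (hB : 0 < B)
    (hf : IsFrameFor f (⊤ : Submodule ℂ H) A B)
    (hsub : HasSubframeProperty f)
    (Δg : Set ℕ) (e : ℕ ≃ Δg)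
    (hON : Orthonormal ℂ (fun n => f (e n)))
    (htotal : closedSpan (Set.range fun n => f (e n)) = ⊤) :
    ∃ (m : ℕ) (A' B' : ℝ), 0 < A' ∧ 0 < B' ∧
      ∀ i : ℕ, i ∉ Δg → {n : ℕ | ⟪f i, f (e n)⟫ ≠ 0}.Finite →
        ∀ n ≥ m, ⟪f i, f (e n)⟫ ≠ 0 →
          A' ≤ ‖⟪f i, f (e n)⟫‖ ∧ ‖⟪f i, f (e n)⟫‖ ≤ B' :=
  finite_support_coordinates_eventually_bounded_general f A B hB hf hsub Δg e hON htotal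

end
end

section
/- Let (f_i)_{i=1}^∞ be a frame for a Hilbert space H with the subframe property which can be partitioned into a Riesz basis (g_i)_{i=1}^∞ of H, a family (h_i)_{i∈Γ} of vectors each having finite support with respect to (g_i), and a nonempty finite family (k_i)_{i=1}^ℓ (ℓ ≥ 1) of vectors each having infinite support with respect to (g_i). Then no permutation of (f_i)_{i=1}^∞ satisfies the projection method. -/
/-!
Write `F = f ∘ σ` and `N` for the algebraic span of the frame vectors outside the finite family
`(f l)_{l ∈ Λ}`; `N` is dense (it contains the Riesz basis) and consists of vectors of finite support. In the
`n`-th finite section, `F i = ∑_{j < n} ⟪F j, Sₙ⁻¹ F i⟫ F j` differs from an element of `N` only by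
the finitely many terms indexed by `Λ`. Their coefficients live in a finite-dimensional space, where
"`F i` minus this combination lies in `N`" is a closed condition, so the projection method passes it
to the limit: `F i - ∑_{l ∈ Λ} ⟪F l, S⁻¹ F i⟫ F l ∈ N`. The matrix `I - (⟪F l, S⁻¹ F m⟫)_{l,m ∈ Λ}`
is invertible: a fixed vector `a` of the Gram-type matrix gives `y = ∑ₘ aₘ S⁻¹ F m` with
`∑_{j ∉ Λ} ⟪F j, y⟫ F j = 0`, hence `y ⊥ N` and `y = 0`. Inverting it writes each `F k`, `k ∈ Λ`,
as an element of `N`, which a vector of infinite support is not.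
-/

open scoped ComplexInnerProductSpace
open Submodule Filter

noncomputable section

variable {H : Type*} [NormedAddCommGroup H] [InnerProductSpace ℂ H] [CompleteSpace H]

open scoped InnerProductSpace
open Topology

section ProjectionMethod

theorem Submodule.isClosed_setOf_sub_mem {𝕜 V M : Type*} [NontriviallyNormedField 𝕜]
    [CompleteSpace 𝕜] [NormedAddCommGroup V] [NormedSpace 𝕜 V] [FiniteDimensional 𝕜 V]
    [AddCommGroup M] [Module 𝕜 M] (N : Submodule 𝕜 M) (x : M) (T : V →ₗ[𝕜] M) :
    IsClosed {a | x - T a ∈ N} := by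
  let L : 𝕜 × V →ₗ[𝕜] M := (LinearMap.fst 𝕜 𝕜 V).smulRight x - T ∘ₗ LinearMap.snd 𝕜 𝕜 V
  have hL : IsClosed (N.comap L : Set (𝕜 × V)) := closed_of_finiteDimensional _
  convert hL.preimage (f := fun a => ((1 : 𝕜), a)) (by fun_prop) using 1
  ext a
  simp [L]

variable {𝕜 E : Type*} [RCLike 𝕜] [NormedAddCommGroup E] [InnerProductSpace 𝕜 E]

theorem inner_eq_zero_of_hasSum_inner_smul_eq_zero {ι : Type*} {F : ι → E} {y : E}
    (h : HasSum (fun j => ⟪F j, y⟫_𝕜 • F j) 0) (j : ι) : ⟪F j, y⟫_𝕜 = 0 := by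
  have hsq : HasSum (fun j => ((‖⟪F j, y⟫_𝕜‖ ^ 2 : ℝ) : 𝕜)) 0 := by
    convert (innerSL 𝕜 y).hasSum h using 1
    · ext j
      rw [innerSL_apply_apply, inner_smul_right, ← inner_conj_symm y, RCLike.mul_conj]
      push_cast; rfl
    · simp
  rw [← RCLike.ofReal_zero, RCLike.hasSum_ofReal] at hsq
  have h0 := (hasSum_zero_iff_of_nonneg fun _ => sq_nonneg _).mp hsq
  simpa using congrFun h0 j

theorem sum_sub_sum_mem_span_image_compl {s t : Finset ℕ} (hst : s ⊆ t) (c : ℕ → 𝕜) (F : ℕ → E) :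
    ∑ j ∈ t, c j • F j - ∑ j ∈ s, c j • F j ∈ span 𝕜 (F '' (↑s)ᶜ) := by
  rw [← Finset.sum_sdiff hst, add_sub_cancel_right]
  exact sum_mem fun j hj => smul_mem _ _ <| subset_span ⟨j, (Finset.mem_sdiff.mp hj).2, rfl⟩

variable {F u : ℕ → E} {w : ℕ → ℕ → E}

theorem sub_sum_inner_smul_mem_span_image_compl
    (hw : ∀ n, ∀ i < n, ∑ j ∈ Finset.range n, ⟪F j, w n i⟫_𝕜 • F j = F i)
    (hP : ∀ x i, Tendsto (fun n => ⟪w n i, x⟫_𝕜) atTop (𝓝 ⟪u i, x⟫_𝕜)) (s : Finset ℕ) (i : ℕ) :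
    F i - ∑ l : s, ⟪F l, u i⟫_𝕜 • F l ∈ span 𝕜 (F '' (↑s)ᶜ) := by
  let T := Fintype.linearCombination 𝕜 (fun l : s => F l)
  have hclosed := (span 𝕜 (F '' (↑s)ᶜ)).isClosed_setOf_sub_mem (F i) T
  have hlim : Tendsto (fun n (l : s) => ⟪F l, w n i⟫_𝕜) atTop (𝓝 fun l => ⟪F l, u i⟫_𝕜) :=
    tendsto_pi_nhds.mpr fun l => by
      simpa [Function.comp_def] using (RCLike.continuous_conj.tendsto _).comp (hP (F l) i)
  obtain ⟨m, hm⟩ := s.exists_nat_subset_range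
  refine hclosed.mem_of_tendsto hlim ?_
  filter_upwards [eventually_ge_atTop (max m (i + 1))] with n hn
  have hsn : s ⊆ Finset.range n := hm.trans (Finset.range_subset_range.mpr (le_of_max_le_left hn))
  have := sum_sub_sum_mem_span_image_compl hsn (fun j => ⟪F j, w n i⟫_𝕜) F
  rwa [hw n i (le_of_max_le_right hn), ← Finset.sum_coe_sort s] at this

theorem hasSum_inner_sum_smul (hu : ∀ i, HasSum (fun j => ⟪F j, u i⟫_𝕜 • F j) (F i))
    {s : Finset ℕ} (a : s → 𝕜) :
    HasSum (fun j => ⟪F j, ∑ m : s, a m • u m⟫_𝕜 • F j) (∑ m : s, a m • F m) := by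
  convert hasSum_sum fun (m : s) _ => (hu m).const_smul (a m) using 2 with j
  simp [inner_sum, inner_smul_right, Finset.sum_smul, smul_smul]

theorem mem_span_image_compl_of_projection_method {s : Finset ℕ}
    (hdense : (span 𝕜 (F '' (↑s)ᶜ)).topologicalClosure = ⊤)
    (hu : ∀ i, HasSum (fun j => ⟪F j, u i⟫_𝕜 • F j) (F i))
    (hw : ∀ n, ∀ i < n, ∑ j ∈ Finset.range n, ⟪F j, w n i⟫_𝕜 • F j = F i)
    (hP : ∀ x i, Tendsto (fun n => ⟪w n i, x⟫_𝕜) atTop (𝓝 ⟪u i, x⟫_𝕜)) (k : ℕ) :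
    F k ∈ span 𝕜 (F '' (↑s)ᶜ) := by
  classical
  by_cases hk : k ∈ s
  swap
  · exact subset_span ⟨k, hk, rfl⟩
  let T : (s → 𝕜) →ₗ[𝕜] E := Fintype.linearCombination 𝕜 fun l : s => F l
  let Y : (s → 𝕜) →ₗ[𝕜] E := Fintype.linearCombination 𝕜 fun l : s => u l
  let G : (s → 𝕜) →ₗ[𝕜] s → 𝕜 := LinearMap.pi fun l => innerₛₗ 𝕜 (F l) ∘ₗ Y
  let D : (s → 𝕜) →ₗ[𝕜] s → 𝕜 := LinearMap.id - G
  have hinj : Function.Injective D := by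
    refine (injective_iff_map_eq_zero D).mpr fun a ha => ?_
    have hfix : ∀ l : s, ⟪F l, Y a⟫_𝕜 = a l := fun l => (sub_eq_zero.mp (congrFun ha l)).symm
    have hsum : HasSum (fun j => ⟪F j, Y a⟫_𝕜 • F j) (T a) := hasSum_inner_sum_smul hu a
    have hcompl : HasSum (fun j : {j // j ∉ s} => ⟪F j, Y a⟫_𝕜 • F j) 0 := by
      rw [s.hasSum_compl_iff (f := fun j => ⟪F j, Y a⟫_𝕜 • F j), zero_add, ← Finset.sum_coe_sort s]
      simp only [hfix]
      exact hsum
    have hY : Y a = 0 := by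
      refine (dense_iff_topologicalClosure_eq_top.mpr hdense).eq_zero_of_inner_right 𝕜
        fun v hv => ?_
      refine mem_orthogonal_singleton_iff_inner_left.mp (span_le.mpr ?_ hv)
      rintro _ ⟨j, hj, rfl⟩
      exact mem_orthogonal_singleton_iff_inner_left.mpr
        (inner_eq_zero_of_hasSum_inner_smul_eq_zero hcompl ⟨j, hj⟩)
    ext l
    rw [← hfix, hY, inner_zero_right, Pi.zero_apply]
  have hTG : ∀ b, T (D b) ∈ span 𝕜 (F '' (↑s)ᶜ) := by
    intro b
    have hTD : T (D b) = ∑ m : s, b m • (F m - ∑ l : s, ⟪F l, u m⟫_𝕜 • F l) := by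
      simp only [D, G, T, Y, LinearMap.sub_apply, LinearMap.id_apply, map_sub,
        Fintype.linearCombination_apply, LinearMap.pi_apply, LinearMap.comp_apply,
        innerₛₗ_apply_apply, inner_sum, inner_smul_right, smul_sub, Finset.sum_sub_distrib,
        Finset.smul_sum, smul_smul, Finset.sum_smul]
      rw [Finset.sum_comm]
    rw [hTD]
    exact sum_mem fun m _ => smul_mem _ _ (sub_sum_inner_smul_mem_span_image_compl hw hP s m)
  obtain ⟨b, hb⟩ := LinearMap.injective_iff_surjective.mp hinj (Pi.single ⟨k, hk⟩ 1)
  simpa [hb, T] using hTG b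

end ProjectionMethod

/-- For the permuted frame `F = f ∘ σ`, `u i = S⁻¹ (F i)` is encoded by
`∑ⱼ ⟪F j, u i⟫ • F j = F i` and `w n i = Sₙ⁻¹ (F i)` (for `i < n`) by
`w n i ∈ span (F 0, …, F (n-1))` together with `∑_{j < n} ⟪F j, w n i⟫ • F j = F i`. Vectors of
finite support are those in the algebraic span of the basis `f ∘ e`. -/
theorem projection_method_fails_of_infinite_support_general
    (f : ℕ → H)
    (Δg Γ Λ : Set ℕ)
    (hpart : Δg ∪ Γ ∪ Λ = Set.univ)
    (e : ℕ ≃ Δg)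
    (hRB : IsRieszBasis (fun n => f (e n)))
    (hΓ : ∀ i ∈ Γ, f i ∈ Submodule.span ℂ (Set.range fun n => f (e n)))
    (hΛfin : Λ.Finite) (hΛne : Λ.Nonempty)
    (hΛ : ∀ i ∈ Λ, f i ∉ Submodule.span ℂ (Set.range fun n => f (e n))) :
    ∀ σ : Equiv.Perm ℕ,
      ∀ u : ℕ → H,
        (∀ i, HasSum (fun j => ⟪f (σ j), u i⟫ • f (σ j)) (f (σ i))) →
      ∀ w : ℕ → ℕ → H,
        (∀ n, ∀ i < n,
          w n i ∈ Submodule.span ℂ ((fun j => f (σ j)) '' Set.Iio n) ∧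
          ∑ j ∈ Finset.range n, ⟪f (σ j), w n i⟫ • f (σ j) = f (σ i)) →
      ¬ (∀ (x : H) (i : ℕ),
          Filter.Tendsto (fun n => ⟪w n i, x⟫) Filter.atTop (nhds ⟪u i, x⟫)) := by
  intro σ u hu w hw hP
  set M := span ℂ (Set.range fun n => f (e n))
  have hbasis_notMem : ∀ n, (e n : ℕ) ∉ Λ := fun n hn => hΛ _ hn (subset_span ⟨n, rfl⟩)
  have hmem : span ℂ (f '' Λᶜ) ≤ M := by
    refine span_le.mpr ?_
    rintro _ ⟨i, hi, rfl⟩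
    obtain (hΔg | hΓi) | hΛi : i ∈ Δg ∪ Γ ∪ Λ := hpart ▸ Set.mem_univ i
    · exact subset_span ⟨e.symm ⟨i, hΔg⟩, by simp⟩
    · exact hΓ i hΓi
    · exact absurd hΛi hi
  have hdense : (span ℂ (f '' Λᶜ)).topologicalClosure = ⊤ := by
    refine top_unique (hRB.1 ▸ topologicalClosure_mono (span_le.mpr ?_))
    rintro _ ⟨n, rfl⟩
    exact subset_span ⟨e n, hbasis_notMem n, rfl⟩
  let s := (hΛfin.preimage σ.injective.injOn).toFinset
  have hs : (f ∘ σ) '' (↑s)ᶜ = f '' Λᶜ := by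
    rw [Set.Finite.coe_toFinset, Set.image_comp, ← Set.preimage_compl, σ.image_preimage]
  obtain ⟨k, hk⟩ := hΛne
  have hfk := mem_span_image_compl_of_projection_method (F := f ∘ σ) (s := s) (hs ▸ hdense) hu
    (fun n i hi => (hw n i hi).2) hP (σ.symm k)
  rw [hs, Function.comp_apply, σ.apply_symm_apply] at hfk
  exact hΛ k hk (hmem hfk)

/-- **Theorem 4.1, (2) ⇒ (1) (contrapositive).** Let `f` be a frame for `H` with the subframe
property, partitioned into a Riesz basis `(g n) = (f (e n))` (indexed by `Δg`), vectors of finite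
support w.r.t. the basis (indexed by `Γ`, i.e. lying in the algebraic span of the basis vectors),
and a nonempty finite family (indexed by `Λ`) of vectors of infinite support.  Then no permutation
of `f` satisfies the projection method.  Here, for the permuted frame `F = f ∘ σ`,
`u i = S⁻¹ (F i)` is characterized by `∑ⱼ ⟪F j, u i⟫ • F j = F i`, and `w n i = Sₙ⁻¹ (F i)`
(for `i < n`) is characterized by membership in `span (F 0, …, F (n-1))` together with
`∑_{j < n} ⟪F j, w n i⟫ • F j = F i`; the projection method asserts
`⟪w n i, x⟫ → ⟪u i, x⟫` for all `x` and `i`. -/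
theorem projection_method_fails_of_infinite_support
    (f : ℕ → H) (A B : ℝ) (hA : 0 < A) (hB : 0 < B)
    (hf : IsFrameFor f (⊤ : Submodule ℂ H) A B)
    (hsub : HasSubframeProperty f)
    (Δg Γ Λ : Set ℕ)
    (hpart : Δg ∪ Γ ∪ Λ = Set.univ) (hdgG : Disjoint Δg Γ) (hdgL : Disjoint Δg Λ)
    (hGL : Disjoint Γ Λ)
    (e : ℕ ≃ Δg)
    (hRB : IsRieszBasis (fun n => f (e n)))
    (hΓ : ∀ i ∈ Γ, f i ∈ Submodule.span ℂ (Set.range fun n => f (e n)))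
    (hΛfin : Λ.Finite) (hΛne : Λ.Nonempty)
    (hΛ : ∀ i ∈ Λ, f i ∉ Submodule.span ℂ (Set.range fun n => f (e n))) :
    ∀ σ : Equiv.Perm ℕ,
      ∀ u : ℕ → H,
        (∀ i, HasSum (fun j => ⟪f (σ j), u i⟫ • f (σ j)) (f (σ i))) →
      ∀ w : ℕ → ℕ → H,
        (∀ n, ∀ i < n,
          w n i ∈ Submodule.span ℂ ((fun j => f (σ j)) '' Set.Iio n) ∧
          ∑ j ∈ Finset.range n, ⟪f (σ j), w n i⟫ • f (σ j) = f (σ i)) →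
      ¬ (∀ (x : H) (i : ℕ),
          Filter.Tendsto (fun n => ⟪w n i, x⟫) Filter.atTop (nhds ⟪u i, x⟫)) :=
  projection_method_fails_of_infinite_support_general f Δg Γ Λ hpart e hRB hΓ hΛfin hΛne hΛ

end
end

section
/- If (f_i)_{i∈I} is a frame for a Hilbert space H (I countably infinite) with the subframe property, then there is a finite subset Δ ⊆ I such that (f_i)_{i∈I∖Δ} is a frame for its closed linear span for which (in every enumeration) the strong projection method works. -/
open scoped ComplexInnerProductSpace
open Submodule Filter

noncomputable section

variable {H : Type*} [NormedAddCommGroup H] [InnerProductSpace ℂ H] [CompleteSpace H]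

set_option linter.unusedSectionVars false
set_option linter.unusedVariables false
set_option maxHeartbeats 2000000

lemma cs_finset {ι : Type*} (F : Finset ι) (a b : ι → ℝ) (ha : ∀ i, 0 ≤ a i)
    (hb : ∀ i, 0 ≤ b i) :
    ∑ j ∈ F, a j * b j ≤ Real.sqrt (∑ j ∈ F, a j ^ 2) * Real.sqrt (∑ j ∈ F, b j ^ 2) := by
  have h := Finset.sum_mul_sq_le_sq_mul_sq F a b
  have h0 : (0:ℝ) ≤ ∑ j ∈ F, a j * b j :=
    Finset.sum_nonneg fun i _ => mul_nonneg (ha i) (hb i)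
  have := Real.sqrt_le_sqrt h
  rwa [Real.sqrt_sq h0, Real.sqrt_mul (Finset.sum_nonneg fun i _ => sq_nonneg (a i))] at this

lemma cs_finset_c {ι : Type*} (F : Finset ι) (a b : ι → ℂ) :
    ‖∑ j ∈ F, a j * b j‖ ≤ Real.sqrt (∑ j ∈ F, ‖a j‖ ^ 2) * Real.sqrt (∑ j ∈ F, ‖b j‖ ^ 2) := by
  refine le_trans (norm_sum_le _ _) ?_
  simp only [norm_mul]
  exact cs_finset F _ _ (fun i => norm_nonneg _) (fun i => norm_nonneg _)

section Synth

variable {ι : Type*} {h : ι → H} {B : ℝ}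

/-- Bessel family hypotheses. -/
def Bessel (h : ι → H) (B : ℝ) : Prop :=
  0 < B ∧ ∀ x : H, Summable (fun i => ‖⟪h i, x⟫‖ ^ 2) ∧ ∑' i, ‖⟪h i, x⟫‖ ^ 2 ≤ B * ‖x‖ ^ 2

variable (hb : Bessel h B)
include hb

lemma bessel_fin (x : H) (F : Finset ι) :
    ∑ j ∈ F, ‖⟪h j, x⟫‖ ^ 2 ≤ B * ‖x‖ ^ 2 :=
  le_trans (Summable.sum_le_tsum F (fun i _ => sq_nonneg _) (hb.2 x).1) (hb.2 x).2

lemma synth_fin (c : ι → ℂ) (F : Finset ι) :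
    ‖∑ j ∈ F, c j • h j‖ ≤ Real.sqrt B * Real.sqrt (∑ j ∈ F, ‖c j‖ ^ 2) := by
  set z := ∑ j ∈ F, c j • h j with hz
  rcases eq_or_ne z 0 with h0 | h0
  · rw [h0, norm_zero]
    positivity
  · have hzz : (⟪z, z⟫ : ℂ) = ∑ j ∈ F, (starRingEnd ℂ) (c j) * ⟪h j, z⟫ := by
      rw [hz, sum_inner]
      refine Finset.sum_congr rfl fun j _ => ?_
      rw [inner_smul_left]
    have h1 : ‖z‖ ^ 2 ≤ Real.sqrt (∑ j ∈ F, ‖c j‖ ^ 2) * Real.sqrt (∑ j ∈ F, ‖⟪h j, z⟫‖ ^ 2) := by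
      have : ‖(⟪z, z⟫ : ℂ)‖ = ‖z‖ ^ 2 := by
        rw [inner_self_eq_norm_sq_to_K]
        simp [pow_two, norm_mul]
      rw [← this, hzz]
      have := cs_finset_c F (fun j => (starRingEnd ℂ) (c j)) (fun j => ⟪h j, z⟫)
      simpa using this
    have h2 : Real.sqrt (∑ j ∈ F, ‖⟪h j, z⟫‖ ^ 2) ≤ Real.sqrt B * ‖z‖ := by
      have := Real.sqrt_le_sqrt (bessel_fin hb z F)
      rwa [Real.sqrt_mul (le_of_lt hb.1), Real.sqrt_sq (norm_nonneg _)] at this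
    have hzpos : 0 < ‖z‖ := norm_pos_iff.mpr h0
    have h3 : ‖z‖ ^ 2 ≤ Real.sqrt (∑ j ∈ F, ‖c j‖ ^ 2) * (Real.sqrt B * ‖z‖) :=
      le_trans h1 (mul_le_mul_of_nonneg_left h2 (Real.sqrt_nonneg _))
    have := (mul_le_mul_iff_left₀ hzpos).mp (by nlinarith [h3] : ‖z‖ * ‖z‖ ≤ (Real.sqrt B * Real.sqrt (∑ j ∈ F, ‖c j‖ ^ 2)) * ‖z‖)
    linarith

lemma synth_summable {c : ι → ℂ} (hc : Summable (fun i => ‖c i‖ ^ 2)) :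
    Summable (fun j => c j • h j) := by
  rw [summable_iff_vanishing]
  intro e he
  rcases Metric.mem_nhds_iff.mp he with ⟨ε, hε, hball⟩
  have hδ : (0:ℝ) < (ε / (Real.sqrt B + 1)) ^ 2 := by
    have : 0 < Real.sqrt B + 1 := by positivity
    positivity
  have hvan := summable_iff_vanishing.mp hc _ (Metric.ball_mem_nhds (0:ℝ) hδ)
  rcases hvan with ⟨s, hs⟩
  refine ⟨s, fun t ht => ?_⟩
  apply hball
  rw [Metric.mem_ball, dist_zero_right]
  have h1 : ∑ j ∈ t, ‖c j‖ ^ 2 < (ε / (Real.sqrt B + 1)) ^ 2 := by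
    have := hs t ht
    rw [Metric.mem_ball, dist_zero_right, Real.norm_eq_abs] at this
    exact lt_of_le_of_lt (le_abs_self _) this
  calc ‖∑ j ∈ t, c j • h j‖ ≤ Real.sqrt B * Real.sqrt (∑ j ∈ t, ‖c j‖ ^ 2) := synth_fin hb c t
    _ ≤ Real.sqrt B * (ε / (Real.sqrt B + 1)) := by
        refine mul_le_mul_of_nonneg_left ?_ (Real.sqrt_nonneg _)
        have := Real.sqrt_le_sqrt h1.le
        rwa [Real.sqrt_sq (by positivity)] at this
    _ < ε := by
        have hs1 : 0 < Real.sqrt B + 1 := by positivity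
        rw [mul_div_assoc']
        rw [div_lt_iff₀ hs1]
        nlinarith [Real.sqrt_nonneg B]

lemma synth_tsum_norm {c : ι → ℂ} (hc : Summable (fun i => ‖c i‖ ^ 2)) :
    ‖∑' j, c j • h j‖ ≤ Real.sqrt B * Real.sqrt (∑' i, ‖c i‖ ^ 2) := by
  have hsum := (synth_summable hb hc).hasSum
  refine le_of_tendsto hsum.norm ?_
  filter_upwards with F
  refine le_trans (synth_fin hb c F) ?_
  refine mul_le_mul_of_nonneg_left (Real.sqrt_le_sqrt ?_) (Real.sqrt_nonneg _)
  exact Summable.sum_le_tsum F (fun i _ => sq_nonneg _) hc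


lemma coeff_summable (x : H) : Summable (fun j => ‖(⟪h j, x⟫:ℂ)‖ ^ 2) := (hb.2 x).1

/-- The frame operator as a continuous linear map. -/
def SOp : H →L[ℂ] H := by
  refine LinearMap.mkContinuous
    { toFun := fun x => ∑' j, (⟪h j, x⟫:ℂ) • h j
      map_add' := ?_
      map_smul' := ?_ } B ?_
  · intro x y
    have hx := synth_summable hb (coeff_summable hb x)
    have hy := synth_summable hb (coeff_summable hb y)
    have hcongr : ∀ j, (⟪h j, x + y⟫:ℂ) • h j = (⟪h j, x⟫:ℂ) • h j + (⟪h j, y⟫:ℂ) • h j :=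
      fun j => by rw [inner_add_right, add_smul]
    show (∑' j, (⟪h j, x + y⟫:ℂ) • h j) = _
    rw [tsum_congr hcongr, Summable.tsum_add hx hy]
  · intro a x
    simp only [RingHom.id_apply]
    rw [← tsum_const_smul'' a]
    congr 1
    funext j
    rw [inner_smul_right, mul_smul]
  · intro x
    simp only [LinearMap.coe_mk, AddHom.coe_mk]
    calc ‖∑' j, (⟪h j, x⟫:ℂ) • h j‖ ≤ Real.sqrt B * Real.sqrt (∑' i, ‖(⟪h i, x⟫:ℂ)‖ ^ 2) :=
          synth_tsum_norm hb (coeff_summable hb x)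
      _ ≤ Real.sqrt B * Real.sqrt (B * ‖x‖ ^ 2) := by
          exact mul_le_mul_of_nonneg_left (Real.sqrt_le_sqrt (hb.2 x).2) (Real.sqrt_nonneg _)
      _ = B * ‖x‖ := by
          rw [Real.sqrt_mul hb.1.le, Real.sqrt_sq (norm_nonneg _), ← mul_assoc,
            Real.mul_self_sqrt hb.1.le]

lemma SOp_apply (x : H) : SOp hb x = ∑' j, (⟪h j, x⟫:ℂ) • h j := rfl

lemma hasSum_SOp (x : H) : HasSum (fun j => (⟪h j, x⟫:ℂ) • h j) (SOp hb x) :=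
  (synth_summable hb (coeff_summable hb x)).hasSum

lemma inner_SOp_right (a x : H) : (⟪a, SOp hb x⟫:ℂ) = ∑' j, (⟪h j, x⟫:ℂ) * ⟪a, h j⟫ := by
  have := ((hasSum_SOp hb x).mapL (innerSL ℂ a)).tsum_eq
  simp only [innerSL_apply_apply] at this
  rw [← this]
  congr 1
  funext j
  simp [inner_smul_right, mul_comm]

lemma SOp_selfadj (x y : H) : (⟪SOp hb x, y⟫:ℂ) = ⟪x, SOp hb y⟫ := by
  rw [← inner_conj_symm, inner_SOp_right hb y x, inner_SOp_right hb x y]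
  rw [starRingEnd_apply, tsum_star]
  congr 1
  funext j
  rw [star_mul']
  simp only [← starRingEnd_apply]
  rw [inner_conj_symm, inner_conj_symm, mul_comm]

lemma inner_SOp_self (x : H) : (⟪x, SOp hb x⟫:ℂ) = ((∑' j, ‖(⟪h j, x⟫:ℂ)‖ ^ 2 : ℝ) : ℂ) := by
  rw [inner_SOp_right hb x x]
  have : ((∑' j, ‖(⟪h j, x⟫:ℂ)‖ ^ 2 : ℝ) : ℂ) = ∑' j, ((‖(⟪h j, x⟫:ℂ)‖ ^ 2 : ℝ) : ℂ) := by
    exact Complex.ofRealCLM.map_tsum (coeff_summable hb x)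
  rw [this]
  congr 1
  funext j
  rw [← inner_conj_symm x (h j), Complex.mul_conj']
  norm_cast

lemma SOp_mem_closedSpan (x : H) : SOp hb x ∈ closedSpan (Set.range h) := by
  have : (closedSpan (Set.range h) : Set H) = closure (Submodule.span ℂ (Set.range h) : Set H) := rfl
  rw [← SetLike.mem_coe, this]
  refine mem_closure_of_tendsto (hasSum_SOp hb x) ?_
  filter_upwards with F
  exact SetLike.mem_coe.mpr (Submodule.sum_mem _ fun j _ =>
    Submodule.smul_mem _ _ (Submodule.subset_span ⟨j, rfl⟩))


end Synth

lemma surj_of_lower (S : H →L[ℂ] H) (K : Submodule ℂ H) (hKc : IsClosed (K : Set H))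
    (hrange : ∀ x ∈ K, S x ∈ K)
    (A₀ : ℝ) (hA₀ : 0 < A₀)
    (hlow : ∀ y ∈ K, A₀ * ‖y‖ ^ 2 ≤ RCLike.re (⟪y, S y⟫:ℂ)) :
    ∀ x ∈ K, ∃ y ∈ K, S y = x := by
  haveI : CompleteSpace K := hKc.completeSpace_coe
  set T : K →L[ℂ] K := ContinuousLinearMap.codRestrict (S.comp K.subtypeL)
    K (fun y => hrange _ y.2) with hT
  have hTapp : ∀ y : K, (T y : H) = S y := fun y => rfl
  have hbdd : ∀ y : K, ‖y‖ ≤ A₀⁻¹ * ‖T y‖ := by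
    intro y
    rcases eq_or_ne y 0 with h0 | h0
    · simp [h0]
    · have hy : 0 < ‖y‖ := norm_pos_iff.mpr h0
      have h1 : A₀ * ‖y‖ ^ 2 ≤ RCLike.re (⟪(y:H), S y⟫:ℂ) := hlow y y.2
      have h2 : RCLike.re (⟪(y:H), S (y:H)⟫:ℂ) ≤ ‖(y:H)‖ * ‖S (y:H)‖ := re_inner_le_norm _ _
      have h3 : A₀ * ‖y‖ ^ 2 ≤ ‖y‖ * ‖T y‖ := by
        have : ‖(T y : H)‖ = ‖S (y:H)‖ := congrArg norm (hTapp y)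
        rw [show ‖T y‖ = ‖(T y : H)‖ from rfl, this]
        exact le_trans h1 h2
      rw [show ‖(y:K)‖ = ‖(y:H)‖ from rfl] at *
      rw [le_inv_mul_iff₀ hA₀]
      nlinarith
  have hanti : AntilipschitzWith (⟨A₀⁻¹, by positivity⟩ : NNReal) T :=
    ContinuousLinearMap.antilipschitz_of_bound T hbdd
  have hclosed : IsClosed ((LinearMap.range (T : K →ₗ[ℂ] K) : Submodule ℂ K) : Set K) := by
    have := hanti.isClosed_range T.uniformContinuous
    rw [LinearMap.coe_range]; exact this
  haveI : CompleteSpace (LinearMap.range (T : K →ₗ[ℂ] K)) := hclosed.completeSpace_coe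
  have horth : (LinearMap.range (T : K →ₗ[ℂ] K))ᗮ = ⊥ := by
    rw [Submodule.eq_bot_iff]
    intro z hz
    have hzT : (⟪T z, z⟫:ℂ) = 0 := hz (T z) (LinearMap.mem_range_self _ z)
    have hz2 : (⟪(z:K), T z⟫:ℂ) = 0 := by
      rw [← inner_conj_symm, hzT, map_zero]
    have : A₀ * ‖z‖ ^ 2 ≤ 0 := by
      have h1 := hlow (z:H) z.2
      have : (⟪(z:H), S (z:H)⟫:ℂ) = ⟪(z:K), T z⟫ := rfl
      rw [this, hz2] at h1
      simpa using h1
    have : ‖z‖ ^ 2 ≤ 0 := by nlinarith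
    have : ‖z‖ = 0 := by nlinarith [sq_nonneg ‖z‖, norm_nonneg z]
    exact norm_eq_zero.mp this
  have htop : LinearMap.range (T : K →ₗ[ℂ] K) = ⊤ := Submodule.orthogonal_eq_bot_iff.mp horth
  intro x hx
  have : (⟨x, hx⟩ : K) ∈ LinearMap.range (T : K →ₗ[ℂ] K) := htop ▸ Submodule.mem_top
  rcases this with ⟨y, hy⟩
  exact ⟨y, y.2, congrArg Subtype.val hy⟩

/-- Uniform lower frame bound over finite subfamilies of `G`. -/
def SAT (f : ℕ → H) (G : Set ℕ) (A₀ : ℝ) : Prop :=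
  ∀ F : Finset ℕ, ↑F ⊆ G → ∀ x ∈ Submodule.span ℂ (f '' ↑F),
    A₀ * ‖x‖ ^ 2 ≤ ∑' i, Set.indicator G (fun i => ‖⟪x, f i⟫‖ ^ 2) i

section Baire
variable {f : ℕ → H} {A B : ℝ}

lemma sat_of_frameSeq (Λ : Set ℕ) {A' B' : ℝ}
    (hfs : IsFrameSequence (fun i : Λ => f i) A' B') : SAT f Λ A' := by
  intro F hF x hx
  have hxmem : x ∈ closedSpan (Set.range (fun i : Λ => f i)) := by
    apply Submodule.le_topologicalClosure
    refine Submodule.span_mono ?_ hx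
    rintro y ⟨v, hv, rfl⟩
    exact ⟨⟨v, hF hv⟩, rfl⟩
  have := (hfs.2 x hxmem).2.1
  rwa [show (∑' i : Λ, ‖⟪x, f i⟫‖ ^ 2) = ∑' i, Set.indicator Λ (fun i => ‖⟪x, f i⟫‖ ^ 2) i
    from tsum_subtype Λ (fun i => ‖⟪x, f i⟫‖ ^ 2)] at this

variable (hf : IsFrameFor f (⊤ : Submodule ℂ H) A B)
include hf

lemma summ (x : H) : Summable (fun i => ‖⟪x, f i⟫‖ ^ 2) := (hf.2 x trivial).1

lemma tail_small (x : H) {ε : ℝ} (hε : 0 < ε) :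
    ∃ N : ℕ, ∑' k, ‖⟪x, f (k + N)⟫‖ ^ 2 < ε := by
  have hsum := summ hf x
  have h1 : Tendsto (fun N => ∑' k, ‖⟪x, f (k + N)⟫‖ ^ 2) atTop (nhds 0) := by
    have h2 : ∀ N, ∑' k, ‖⟪x, f (k + N)⟫‖ ^ 2
        = (∑' i, ‖⟪x, f i⟫‖ ^ 2) - ∑ i ∈ Finset.range N, ‖⟪x, f i⟫‖ ^ 2 := by
      intro N
      have := Summable.sum_add_tsum_nat_add (f := fun i => ‖⟪x, f i⟫‖ ^ 2) N hsum
      linarith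
    simp only [h2]
    have := hsum.hasSum.tendsto_sum_nat
    have := Tendsto.sub (tendsto_const_nhds
      (x := (∑' i, ‖⟪x, f i⟫‖ ^ 2)) (f := atTop)) this
    simpa using this
  rcases Metric.tendsto_atTop.mp h1 ε hε with ⟨N, hN⟩
  refine ⟨N, ?_⟩
  have := hN N le_rfl
  rwa [Real.dist_0_eq_abs, abs_of_nonneg (tsum_nonneg fun k => sq_nonneg _)] at this

lemma isClosed_C (m : ℕ) :
    IsClosed {χ : ℕ → Bool | SAT f {i | χ i = true} (1 / (m + 1))} := by
  rw [← closure_subset_iff_isClosed]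
  intro χ hχ F hF x hx
  refine le_of_forall_pos_le_add ?_
  intro ε hε
  rcases tail_small hf x hε with ⟨N₁, hN₁⟩
  set N := max N₁ ((F.sup id) + 1) with hNdef
  have hFN : ∀ i ∈ F, i < N := by
    intro i hi
    have h1 : i ≤ F.sup id := Finset.le_sup (f := id) hi
    have h2 : F.sup id + 1 ≤ N := by rw [hNdef]; exact le_max_right _ _
    exact lt_of_le_of_lt h1 (lt_of_lt_of_le (Nat.lt_succ_self _) h2)
  have hN1N : N₁ ≤ N := by rw [hNdef]; exact le_max_left _ _
  have htail : ∑' k, ‖⟪x, f (k + N)⟫‖ ^ 2 < ε := by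
    have hsum₁ : Summable (fun k => ‖⟪x, f (k + N₁)⟫‖ ^ 2) :=
      (summable_nat_add_iff N₁).mpr (summ hf x)
    have hsumN : Summable (fun k => ‖⟪x, f (k + N)⟫‖ ^ 2) :=
      (summable_nat_add_iff N).mpr (summ hf x)
    have h2 : ∑' k, ‖⟪x, f (k + N)⟫‖ ^ 2 ≤ ∑' k, ‖⟪x, f (k + N₁)⟫‖ ^ 2 := by
      have h3 := Summable.sum_add_tsum_nat_add (f := fun k => ‖⟪x, f (k + N₁)⟫‖ ^ 2) (N - N₁) hsum₁
      have h4 : ∀ k, ‖⟪x, f ((k + (N - N₁)) + N₁)⟫‖ ^ 2 = ‖⟪x, f (k + N)⟫‖ ^ 2 := by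
        intro k
        have he : k + (N - N₁) + N₁ = k + N := by omega
        rw [he]
      have h5 : (0:ℝ) ≤ ∑ i ∈ Finset.range (N - N₁), ‖⟪x, f (i + N₁)⟫‖ ^ 2 :=
        Finset.sum_nonneg fun i _ => sq_nonneg _
      simp only [h4] at h3
      linarith
    linarith
  -- cylinder neighborhood
  set V : Set (ℕ → Bool) := ⋂ i ∈ Finset.range N, {χ' : ℕ → Bool | χ' i = χ i} with hV
  have hVopen : IsOpen V := by
    refine isOpen_biInter_finset fun i _ => ?_
    show IsOpen ((fun χ' : ℕ → Bool => χ' i) ⁻¹' {χ i})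
    exact IsOpen.preimage (continuous_apply i) (isOpen_discrete _)
  have hχV : χ ∈ V := by
    simp [hV]
  rcases mem_closure_iff.mp hχ V hVopen hχV with ⟨χ', hχ'V, hχ'C⟩
  have hagree : ∀ i < N, χ' i = χ i := by
    intro i hi
    have := Set.mem_iInter₂.mp hχ'V i (Finset.mem_range.mpr hi)
    exact this
  -- apply SAT of χ'
  have hFχ' : ↑F ⊆ {i | χ' i = true} := by
    intro i hi
    have h1 : χ i = true := hF hi
    have := hagree i (hFN i hi)
    simp only [Set.mem_setOf_eq]
    rw [this, h1]
  have hb := hχ'C F hFχ' x hx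
  set φ := fun i => ‖⟪x, f i⟫‖ ^ 2 with hφ
  have hsummφ := summ hf x
  have hindsum : ∀ (S : Set ℕ), Summable (fun i => Set.indicator S φ i) := by
    intro S
    exact hsummφ.indicator S
  -- split the χ' sum at N
  have hsplit := Summable.sum_add_tsum_nat_add (f := fun i => Set.indicator {i | χ' i = true} φ i) N
    (hindsum _)
  have htail' : ∑' k, Set.indicator {i | χ' i = true} φ (k + N) ≤ ∑' k, φ (k + N) := by
    refine Summable.tsum_le_tsum (fun k => ?_) ((hindsum _).comp_injective (add_left_injective N))
      ((summable_nat_add_iff N).mpr hsummφ)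
    by_cases hk : (k + N) ∈ {i | χ' i = true}
    · rw [Set.indicator_of_mem hk]
    · rw [Set.indicator_of_notMem hk]; positivity
  have hhead : ∑ i ∈ Finset.range N, Set.indicator {i | χ' i = true} φ i
      = ∑ i ∈ Finset.range N, Set.indicator {i | χ i = true} φ i := by
    refine Finset.sum_congr rfl fun i hi => ?_
    have := hagree i (Finset.mem_range.mp hi)
    simp only [Set.indicator]
    rw [show ({i | χ' i = true} : Set ℕ) = {i | χ' i = true} from rfl]
    by_cases hc : χ i = true
    · rw [if_pos (by simp [this, hc]), if_pos (by simp [hc])]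
    · rw [if_neg (by simp [this, hc]), if_neg (by simp [hc])]
  have hheadle : ∑ i ∈ Finset.range N, Set.indicator {i | χ i = true} φ i
      ≤ ∑' i, Set.indicator {i | χ i = true} φ i :=
    Summable.sum_le_tsum _ (fun i _ => Set.indicator_nonneg (fun j _ => sq_nonneg _) i) (hindsum _)
  calc (1 / (m+1):ℝ) * ‖x‖ ^ 2 ≤ ∑' i, Set.indicator {i | χ' i = true} φ i := hb
    _ = ∑ i ∈ Finset.range N, Set.indicator {i | χ' i = true} φ i
        + ∑' k, Set.indicator {i | χ' i = true} φ (k + N) := hsplit.symm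
    _ ≤ ∑' i, Set.indicator {i | χ i = true} φ i + ε := by
        have := le_trans htail' htail.le
        rw [hhead]
        linarith


omit hf in
lemma sat_mono {Λ : Set ℕ} {A1 A2 : ℝ} (h12 : A2 ≤ A1) (h : SAT f Λ A1) :
    SAT f Λ A2 := by
  intro F hF x hx
  exact le_trans (mul_le_mul_of_nonneg_right h12 (sq_nonneg _)) (h F hF x hx)

omit hf in
lemma cover (hsub : HasSubframeProperty f) (χ : ℕ → Bool) :
    ∃ m : ℕ, SAT f {i | χ i = true} (1 / (m + 1)) := by
  rcases hsub {i | χ i = true} with ⟨A', B', hA', hB', hfs⟩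
  rcases exists_nat_ge (1 / A') with ⟨n, hn⟩
  refine ⟨n, sat_mono ?_ (sat_of_frameSeq _ hfs)⟩
  rw [div_le_iff₀ (by positivity)]
  rw [div_le_iff₀ hA'] at hn
  nlinarith

lemma baire_main (hsub : HasSubframeProperty f) :
    ∃ (N : ℕ) (D₀ : Set ℕ) (A₀ : ℝ), 0 < A₀ ∧
      ∀ G : Set ℕ, (∀ i, i < N → (i ∈ G ↔ i ∈ D₀)) → SAT f G A₀ := by
  classical
  have hcover : (⋃ m : ℕ, {χ : ℕ → Bool | SAT f {i | χ i = true} (1 / (m + 1))}) = Set.univ := by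
    ext χ
    simp only [Set.mem_iUnion, Set.mem_univ, iff_true, Set.mem_setOf_eq]
    exact cover hsub χ
  obtain ⟨m, χ₀, hχ₀⟩ := nonempty_interior_of_iUnion_of_closed (fun m => isClosed_C hf m) hcover
  have hnhds : {χ : ℕ → Bool | SAT f {i | χ i = true} (1 / (m + 1))} ∈ nhds χ₀ :=
    mem_interior_iff_mem_nhds.mp hχ₀
  rw [nhds_pi] at hnhds
  rcases Filter.mem_pi.mp hnhds with ⟨I, hIfin, t, ht, hsub'⟩
  obtain ⟨N₀, hN₀⟩ := hIfin.bddAbove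
  refine ⟨N₀ + 1, {i | χ₀ i = true}, 1 / (m + 1), by positivity, ?_⟩
  intro G hG
  set χG : ℕ → Bool := fun i => decide (i ∈ G) with hχG
  have hGeq : {i | χG i = true} = G := by
    ext i
    simp [hχG]
  have hmem : χG ∈ I.pi t := by
    intro i hi
    have hiN : i < N₀ + 1 := Nat.lt_succ_of_le (hN₀ hi)
    have : χG i = χ₀ i := by
      have hiff := hG i hiN
      by_cases hc : χ₀ i = true
      · have : i ∈ G := hiff.mpr (by simpa using hc)
        simp [hχG, this, hc]
      · have : i ∉ G := fun hg => hc (by simpa using hiff.mp hg)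
        simp only [Bool.not_eq_true] at hc
        simp [hχG, this, hc]
    rw [this]
    exact mem_of_mem_nhds (ht i)
  have := hsub' hmem
  rwa [Set.mem_setOf_eq, hGeq] at this

end Baire


section Synth2
variable {ι : Type*} {h : ι → H} {B : ℝ} (hb : Bessel h B)
include hb

lemma re_inner_SOp (x : H) : RCLike.re (⟪x, SOp hb x⟫:ℂ) = ∑' j, ‖(⟪h j, x⟫:ℂ)‖ ^ 2 := by
  rw [inner_SOp_self hb]
  exact RCLike.ofReal_re _

lemma lowK {A₀ : ℝ}
    (hsp : ∀ y ∈ Submodule.span ℂ (Set.range h), A₀ * ‖y‖ ^ 2 ≤ ∑' j, ‖(⟪h j, y⟫:ℂ)‖ ^ 2) :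
    ∀ y ∈ closedSpan (Set.range h), A₀ * ‖y‖ ^ 2 ≤ ∑' j, ‖(⟪h j, y⟫:ℂ)‖ ^ 2 := by
  have hcont1 : Continuous fun y : H => A₀ * ‖y‖ ^ 2 := by continuity
  have hcont2 : Continuous fun y : H => RCLike.re (⟪y, SOp hb y⟫:ℂ) := by
    have : Continuous fun y : H => (⟪y, SOp hb y⟫:ℂ) :=
      Continuous.inner continuous_id (SOp hb).continuous
    exact (RCLike.continuous_re.comp this)
  have hclosed : IsClosed {y : H | A₀ * ‖y‖ ^ 2 ≤ RCLike.re (⟪y, SOp hb y⟫:ℂ)} :=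
    isClosed_le hcont1 hcont2
  have hsub : (Submodule.span ℂ (Set.range h) : Set H)
      ⊆ {y : H | A₀ * ‖y‖ ^ 2 ≤ RCLike.re (⟪y, SOp hb y⟫:ℂ)} := by
    intro y hy
    rw [Set.mem_setOf_eq, re_inner_SOp hb]
    exact hsp y hy
  intro y hy
  have : y ∈ closure (Submodule.span ℂ (Set.range h) : Set H) := hy
  have := closure_minimal hsub hclosed this
  rwa [Set.mem_setOf_eq, re_inner_SOp hb] at this

end Synth2

lemma frameSeq_of_sat (f : ℕ → H) (G : Set ℕ) {A₀ B : ℝ} (hA₀ : 0 < A₀)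
    (hb : Bessel (fun i : G => f i) B) (hsat : SAT f G A₀) :
    IsFrameSequence (fun i : G => f i) A₀ B := by
  classical
  set h : G → H := fun i : G => f i with hh
  have hflip : ∀ (x : H) (i : G), ‖(⟪x, h i⟫:ℂ)‖ ^ 2 = ‖(⟪h i, x⟫:ℂ)‖ ^ 2 := by
    intro x i
    rw [norm_inner_symm]
  have hlowspan : ∀ y ∈ Submodule.span ℂ (Set.range h),
      A₀ * ‖y‖ ^ 2 ≤ ∑' j, ‖(⟪h j, y⟫:ℂ)‖ ^ 2 := by
    intro y hy
    obtain ⟨T, hTsub, hyT⟩ := Submodule.mem_span_finite_of_mem_span hy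
    choose idx hidx using fun v : {v // v ∈ T} => hTsub v.2
    set F : Finset ℕ := T.attach.image fun v => ((idx v : G) : ℕ) with hF
    have hFG : ↑F ⊆ G := by
      intro i hi
      simp only [hF, Finset.coe_image, Set.mem_image, Finset.mem_coe, Finset.mem_attach] at hi
      obtain ⟨v, -, rfl⟩ := hi
      exact (idx v).2
    have hTF : (T : Set H) ⊆ f '' ↑F := by
      intro v hv
      refine ⟨((idx ⟨v, hv⟩ : G) : ℕ), ?_, ?_⟩
      · simp only [hF, Finset.coe_image]
        exact ⟨⟨v, hv⟩, by simp, rfl⟩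
      · exact hidx ⟨v, hv⟩
    have hyF : y ∈ Submodule.span ℂ (f '' ↑F) :=
      Submodule.span_mono hTF hyT
    have := hsat F hFG y hyF
    rw [← tsum_subtype G (fun i => ‖(⟪y, f i⟫:ℂ)‖ ^ 2)] at this
    calc A₀ * ‖y‖ ^ 2 ≤ ∑' i : G, ‖(⟪y, f i⟫:ℂ)‖ ^ 2 := this
      _ = ∑' j : G, ‖(⟪h j, y⟫:ℂ)‖ ^ 2 := tsum_congr fun j => hflip y j
  have hlowK := lowK hb hlowspan
  refine ⟨fun i => Submodule.le_topologicalClosure _ (Submodule.subset_span ⟨i, rfl⟩), ?_⟩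
  intro x hx
  have hsummable : Summable fun i : G => ‖(⟪x, h i⟫:ℂ)‖ ^ 2 := by
    have := (hb.2 x).1
    exact this.congr fun i => (hflip x i).symm
  refine ⟨hsummable, ?_, ?_⟩
  · have := hlowK x hx
    calc A₀ * ‖x‖ ^ 2 ≤ ∑' j : G, ‖(⟪h j, x⟫:ℂ)‖ ^ 2 := this
      _ = ∑' i : G, ‖(⟪x, h i⟫:ℂ)‖ ^ 2 := tsum_congr fun j => (hflip x j).symm
  · calc (∑' i : G, ‖(⟪x, h i⟫:ℂ)‖ ^ 2) = ∑' j : G, ‖(⟪h j, x⟫:ℂ)‖ ^ 2 :=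
        tsum_congr fun j => hflip x j
      _ ≤ B * ‖x‖ ^ 2 := (hb.2 x).2

lemma tail_tendsto {a : ℕ → ℝ} (hs : Summable a) :
    Tendsto (fun n => ∑' k, a (k + n)) atTop (nhds 0) := by
  have h2 : ∀ N, ∑' k, a (k + N) = (∑' i, a i) - ∑ i ∈ Finset.range N, a i := by
    intro N
    have := Summable.sum_add_tsum_nat_add (f := a) N hs
    linarith
  simp only [h2]
  have h3 := hs.hasSum.tendsto_sum_nat
  have := Tendsto.sub (tendsto_const_nhds (x := (∑' i, a i)) (f := atTop)) h3
  simpa using this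

lemma bessel_subfamily {f : ℕ → H} {A B : ℝ} (hB : 0 < B)
    (hf : IsFrameFor f (⊤ : Submodule ℂ H) A B) (G : Set ℕ) :
    Bessel (fun i : G => f i) B := by
  refine ⟨hB, fun x => ?_⟩
  have hs : Summable (fun i : ℕ => ‖(⟪f i, x⟫:ℂ)‖ ^ 2) := by
    refine ((hf.2 x trivial).1).congr fun i => ?_
    rw [norm_inner_symm]
  constructor
  · exact hs.subtype G
  · have h1 : (∑' i : G, ‖(⟪f i, x⟫:ℂ)‖ ^ 2)
        = ∑' i, Set.indicator G (fun i => ‖(⟪f i, x⟫:ℂ)‖ ^ 2) i := by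
      exact tsum_subtype G (fun i : ℕ => ‖(⟪f i, x⟫:ℂ)‖ ^ 2)
    rw [h1]
    have h2 : ∑' i, Set.indicator G (fun i => ‖(⟪f i, x⟫:ℂ)‖ ^ 2) i
        ≤ ∑' i, ‖(⟪f i, x⟫:ℂ)‖ ^ 2 := by
      refine Summable.tsum_le_tsum (fun i => ?_) (hs.indicator G) hs
      by_cases hi : i ∈ G
      · rw [Set.indicator_of_mem hi]
      · rw [Set.indicator_of_notMem hi]; positivity
    refine le_trans h2 ?_
    have h3 : (∑' i, ‖(⟪f i, x⟫:ℂ)‖ ^ 2) = ∑' i, ‖(⟪x, f i⟫:ℂ)‖ ^ 2 :=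
      tsum_congr fun i => by rw [norm_inner_symm]
    rw [h3]
    exact (hf.2 x trivial).2.2

lemma bessel_comp_equiv {ι κ : Type*} {h : ι → H} {B : ℝ} (hb : Bessel h B) (e : κ ≃ ι) :
    Bessel (fun k => h (e k)) B := by
  refine ⟨hb.1, fun x => ?_⟩
  constructor
  · exact (e.summable_iff (f := fun i => ‖(⟪h i, x⟫:ℂ)‖ ^ 2)).mpr (hb.2 x).1
  · rw [e.tsum_eq (fun i => ‖(⟪h i, x⟫:ℂ)‖ ^ 2)]
    exact (hb.2 x).2

lemma bessel_shift {h : ℕ → H} {B : ℝ} (hb : Bessel h B) (n : ℕ) :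
    Bessel (fun k => h (k + n)) B := by
  refine ⟨hb.1, fun x => ?_⟩
  have hs := (hb.2 x).1
  have hsn : Summable (fun k => ‖(⟪h (k + n), x⟫:ℂ)‖ ^ 2) := by
    exact (summable_nat_add_iff n).mpr hs
  refine ⟨hsn, ?_⟩
  have hsplit := Summable.sum_add_tsum_nat_add (f := fun i => ‖(⟪h i, x⟫:ℂ)‖ ^ 2) n hs
  have hhead : (0:ℝ) ≤ ∑ i ∈ Finset.range n, ‖(⟪h i, x⟫:ℂ)‖ ^ 2 :=
    Finset.sum_nonneg fun i _ => sq_nonneg _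
  have := (hb.2 x).2
  linarith


/-- **Corollary 4.2.** If `f` is a frame for `H` with the subframe property, then there is a
finite index set `Δ` such that `(f i)_{i ∈ Δᶜ}` is a frame for its closed linear span `K` for
which, in every enumeration `σ` of `Δᶜ`, the strong projection method works.  Here, for the
enumerated family `F = fun n => f (σ n)`, `u i = S⁻¹ (F i) ∈ K` is characterized by
`∑ⱼ ⟪F j, u i⟫ • F j = F i`, and `w n i = Sₙ⁻¹ (F i)` (for `i < n`) is characterized by
membership in `span (F 0, …, F (n-1))` together with `∑_{j < n} ⟪F j, w n i⟫ • F j = F i`. -/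
theorem strong_projection_method_after_removing_finite_set
    (f : ℕ → H) (A B : ℝ) (hA : 0 < A) (hB : 0 < B)
    (hf : IsFrameFor f (⊤ : Submodule ℂ H) A B)
    (hsub : HasSubframeProperty f) :
    ∃ Δ : Set ℕ, Δ.Finite ∧
      (∃ A' B' : ℝ, 0 < A' ∧ 0 < B' ∧ IsFrameSequence (fun i : ↥Δᶜ => f i) A' B') ∧
      ∀ σ : ℕ ≃ ↥Δᶜ,
        ∀ u : ℕ → H,
          (∀ i, u i ∈ closedSpan (Set.range fun n : ℕ => f (σ n)) ∧
            HasSum (fun j => ⟪f (σ j), u i⟫ • f (σ j)) (f (σ i))) →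
        ∀ w : ℕ → ℕ → H,
          (∀ n, ∀ i < n,
            w n i ∈ Submodule.span ℂ ((fun j : ℕ => f (σ j)) '' Set.Iio n) ∧
            ∑ j ∈ Finset.range n, ⟪f (σ j), w n i⟫ • f (σ j) = f (σ i)) →
        ∀ x ∈ closedSpan (Set.range fun n : ℕ => f (σ n)),
          Filter.Tendsto (fun n =>
            (∑ i ∈ Finset.range n, ‖⟪w n i, x⟫ - ⟪u i, x⟫‖ ^ 2) +
            ∑' i : {i : ℕ // n ≤ i}, ‖⟪u i.1, x⟫‖ ^ 2)
            Filter.atTop (nhds 0) := by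
  classical
  obtain ⟨N, D₀, A₀, hA₀, hBaire⟩ := baire_main (f := f) (A := A) (B := B) hf hsub
  set Δ : Set ℕ := Set.Iio N \ D₀ with hΔdef
  have hΔfin : Δ.Finite := (Set.finite_Iio N).subset Set.diff_subset
  have hΔc : ∀ i, i ∈ Δᶜ ↔ (N ≤ i ∨ i ∈ D₀) := by
    intro i
    simp only [hΔdef, Set.mem_compl_iff, Set.mem_diff, Set.mem_Iio, not_and, not_not,
      not_lt]
    constructor
    · intro hcond
      by_cases hiN : i < N
      · exact Or.inr (hcond hiN)
      · exact Or.inl (not_lt.mp hiN)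
    · intro hcond hiN
      rcases hcond with h1 | h2
      · omega
      · exact h2
  -- condition for hBaire applied to subsets G of Δᶜ containing D₀ ∩ [0, N)
  have hGcond : ∀ G : Set ℕ, G ⊆ Δᶜ → (∀ d, d ∈ D₀ → d < N → d ∈ G) →
      (∀ i, i < N → (i ∈ G ↔ i ∈ D₀)) := by
    intro G hG1 hG2 i hiN
    constructor
    · intro hiG
      rcases (hΔc i).mp (hG1 hiG) with h1 | h2
      · omega
      · exact h2
    · intro hiD
      exact hG2 i hiD hiN
  have hsatΔc : SAT f Δᶜ A₀ :=
    hBaire Δᶜ (hGcond Δᶜ le_rfl (fun d hd hdN => (hΔc d).mpr (Or.inr hd)))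
  have hbG : Bessel (fun i : ↥Δᶜ => f i) B := bessel_subfamily hB hf Δᶜ
  have hfs : IsFrameSequence (fun i : ↥Δᶜ => f i) A₀ B :=
    frameSeq_of_sat f Δᶜ hA₀ hbG hsatΔc
  refine ⟨Δ, hΔfin, ⟨A₀, B, hA₀, hB, hfs⟩, ?_⟩
  intro σ u hu w hw x hx
  set g : ℕ → H := fun n => f ((σ n : ↥Δᶜ) : ℕ) with hg
  have hbg : Bessel g B := bessel_comp_equiv hbG σ
  have hrange : Set.range g = Set.range (fun i : ↥Δᶜ => f i) := by
    ext v
    constructor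
    · rintro ⟨n, rfl⟩; exact ⟨σ n, rfl⟩
    · rintro ⟨i, rfl⟩; exact ⟨σ.symm i, by simp [hg]⟩
  set K : Submodule ℂ H := closedSpan (Set.range g) with hK
  have hxK : x ∈ K := hx
  -- lower bound on K for the g-family
  have hlowkK : ∀ y ∈ K, A₀ * ‖y‖ ^ 2 ≤ ∑' j, ‖(⟪g j, y⟫:ℂ)‖ ^ 2 := by
    intro y hy
    have hy' : y ∈ closedSpan (Set.range (fun i : ↥Δᶜ => f i)) := by
      rw [hK, hrange] at hy; exact hy
    have h1 := (hfs.2 y hy').2.1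
    calc A₀ * ‖y‖ ^ 2 ≤ ∑' i : ↥Δᶜ, ‖(⟪y, f i⟫:ℂ)‖ ^ 2 := h1
      _ = ∑' i : ↥Δᶜ, ‖(⟪f i, y⟫:ℂ)‖ ^ 2 := tsum_congr fun i => by rw [norm_inner_symm]
      _ = ∑' j : ℕ, ‖(⟪g j, y⟫:ℂ)‖ ^ 2 :=
          (σ.tsum_eq (fun i : ↥Δᶜ => ‖(⟪f i, y⟫:ℂ)‖ ^ 2)).symm
  -- surjectivity of the frame operator on K
  have hKclosed : IsClosed (K : Set H) := Submodule.isClosed_topologicalClosure _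
  obtain ⟨y, hyK, hSy⟩ := surj_of_lower (SOp hbg) K hKclosed
    (fun z _ => SOp_mem_closedSpan hbg z) A₀ hA₀
    (fun z hz => by rw [re_inner_SOp hbg]; exact hlowkK z hz) x hxK
  -- identity for u
  have huy : ∀ i, (⟪u i, x⟫:ℂ) = ⟪g i, y⟫ := by
    intro i
    have h1 : SOp hbg (u i) = g i := by
      rw [SOp_apply]
      exact ((hu i).2).tsum_eq
    calc (⟪u i, x⟫:ℂ) = ⟪u i, SOp hbg y⟫ := by rw [hSy]
      _ = ⟪SOp hbg (u i), y⟫ := (SOp_selfadj hbg (u i) y).symm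
      _ = ⟪g i, y⟫ := by rw [h1]
  set c : ℕ → ℂ := fun i => ⟪g i, y⟫ with hc
  have hcs : Summable (fun i => ‖c i‖ ^ 2) := (hbg.2 y).1
  set τ : ℕ → ℝ := fun n => ∑' k, ‖c (k + n)‖ ^ 2 with hτ
  have hτ0 : Tendsto τ atTop (nhds 0) := tail_tendsto hcs
  have hT2 : ∀ n, (∑' i : {i : ℕ // n ≤ i}, ‖(⟪u i.1, x⟫:ℂ)‖ ^ 2) = τ n := by
    intro n
    let e : ℕ ≃ {i : ℕ // n ≤ i} :=
      { toFun := fun k => ⟨k + n, Nat.le_add_left n k⟩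
        invFun := fun i => i.1 - n
        left_inv := fun k => by simp
        right_inv := fun i => by
          apply Subtype.ext
          have := i.2
          simp only
          omega }
    rw [← e.tsum_eq (fun i : {i : ℕ // n ≤ i} => ‖(⟪u i.1, x⟫:ℂ)‖ ^ 2)]
    refine tsum_congr fun k => ?_
    show ‖(⟪u (k + n), x⟫:ℂ)‖ ^ 2 = ‖c (k + n)‖ ^ 2
    rw [huy]
  -- finite sections
  set Kn : ℕ → Submodule ℂ H := fun n => Submodule.span ℂ (g '' Set.Iio n) with hKn
  have hfd : ∀ n, FiniteDimensional ℂ (Kn n) := by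
    intro n
    exact FiniteDimensional.span_of_finite ℂ ((Set.finite_Iio n).image g)
  have hKnmono : ∀ m n, m ≤ n → Kn m ≤ Kn n := by
    intro m n hmn
    exact Submodule.span_mono (Set.image_mono (fun i (hi : i < m) => lt_of_lt_of_le hi hmn))
  set Sfin : ℕ → H → H := fun n v => ∑ j ∈ Finset.range n, (⟪g j, v⟫:ℂ) • g j with hSfin
  have hSfin_mem : ∀ n v, Sfin n v ∈ Kn n := by
    intro n v
    refine Submodule.sum_mem _ fun j hj => Submodule.smul_mem _ _ (Submodule.subset_span ?_)
    exact ⟨j, Finset.mem_range.mp hj, rfl⟩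
  have hSfin_sub : ∀ n a b, Sfin n (a - b) = Sfin n a - Sfin n b := by
    intro n a b
    simp only [hSfin, inner_sub_right, sub_smul, Finset.sum_sub_distrib]
  have hinner_Sfin : ∀ n (v z : H),
      (⟪v, Sfin n z⟫:ℂ) = ∑ j ∈ Finset.range n, (⟪g j, z⟫:ℂ) * ⟪v, g j⟫ := by
    intro n v z
    simp only [hSfin, inner_sum, inner_smul_right]
  have hre_Sfin : ∀ n (v : H),
      RCLike.re (⟪v, Sfin n v⟫:ℂ) = ∑ j ∈ Finset.range n, ‖(⟪g j, v⟫:ℂ)‖ ^ 2 := by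
    intro n v
    rw [hinner_Sfin n v v]
    have h1 : ∀ j, (⟪g j, v⟫:ℂ) * ⟪v, g j⟫ = ((‖(⟪g j, v⟫:ℂ)‖ ^ 2 : ℝ) : ℂ) := by
      intro j
      rw [← inner_conj_symm v (g j), Complex.mul_conj']
      norm_cast
    rw [Finset.sum_congr rfl fun j _ => h1 j]
    rw [← Complex.ofReal_sum]
    exact Complex.ofReal_re _
  -- orthogonal projections onto the sections, via choice
  have hPex : ∀ (q : H) (n : ℕ), ∃ p, p ∈ Kn n ∧ (∀ v ∈ Kn n, (⟪v, q - p⟫:ℂ) = 0) ∧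
      (∀ s ∈ Kn n, ‖q - p‖ ≤ ‖q - s‖) := by
    intro q n
    haveI := hfd n
    refine ⟨(orthogonalProjection (Kn n) q : H), (orthogonalProjection (Kn n) q).2, ?_, ?_⟩
    · intro v hv
      have h1 := Submodule.starProjection_inner_eq_zero (K := Kn n) q v hv
      rw [← inner_conj_symm]
      rw [show (⟪q - (orthogonalProjection (Kn n) q : H), v⟫:ℂ) = 0 from h1]
      simp
    · intro s hs
      rw [show ((orthogonalProjection (Kn n) q : H)) = (Kn n).starProjection q from rfl, Submodule.starProjection_minimal]
      refine ciInf_le_of_le ⟨0, ?_⟩ (⟨s, hs⟩ : Kn n) le_rfl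
      rintro r ⟨t, rfl⟩
      exact norm_nonneg _
  choose P hPmem hPorth hPmin using hPex
  set δ : ℕ → ℝ := fun n => ‖y - P y n‖ with hδ
  have hδnonneg : ∀ n, 0 ≤ δ n := fun n => norm_nonneg _
  have hδ0 : Tendsto δ atTop (nhds 0) := by
    rw [Metric.tendsto_atTop]
    intro ε hε
    have hyK' : y ∈ closure (Submodule.span ℂ (Set.range g) : Set H) := hyK
    rcases Metric.mem_closure_iff.mp hyK' ε hε with ⟨s, hs, hds⟩
    obtain ⟨T, hTsub, hsT⟩ := Submodule.mem_span_finite_of_mem_span hs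
    choose idx hidx using fun v : {v // v ∈ T} => hTsub v.2
    set m := (T.attach.sup fun v => idx v) + 1 with hm
    have hsKm : s ∈ Kn m := by
      refine Submodule.span_le.mpr ?_ hsT
      intro v hv
      refine Submodule.subset_span ?_
      refine ⟨idx ⟨v, hv⟩, ?_, hidx ⟨v, hv⟩⟩
      have : idx ⟨v, hv⟩ ≤ T.attach.sup fun v => idx v :=
        Finset.le_sup (Finset.mem_attach T ⟨v, hv⟩)
      simp only [Set.mem_Iio]
      omega
    refine ⟨m, fun n hn => ?_⟩
    have hsKn : s ∈ Kn n := hKnmono m n hn hsKm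
    have h1 : δ n ≤ ‖y - s‖ := hPmin y n s hsKn
    rw [Real.dist_0_eq_abs, abs_of_nonneg (hδnonneg n)]
    calc δ n ≤ ‖y - s‖ := h1
      _ = dist y s := (dist_eq_norm y s).symm
      _ < ε := hds
  -- the threshold n₀
  have hDfin : (D₀ ∩ Set.Iio N).Finite := (Set.finite_Iio N).subset Set.inter_subset_right
  have hDsub : ∀ d ∈ hDfin.toFinset, d ∈ Δᶜ := by
    intro d hd
    rw [Set.Finite.mem_toFinset] at hd
    exact (hΔc d).mpr (Or.inr hd.1)
  set n₀ : ℕ := (hDfin.toFinset.attach.sup fun d => σ.symm ⟨d.1, hDsub d.1 d.2⟩) + 1 with hn₀def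
  have hn₀ : ∀ d, d ∈ D₀ → d < N → ∃ k, k < n₀ ∧ ((σ k : ↥Δᶜ) : ℕ) = d := by
    intro d hd hdN
    have hdmem : d ∈ hDfin.toFinset := by
      rw [Set.Finite.mem_toFinset]
      exact ⟨hd, hdN⟩
    refine ⟨σ.symm ⟨d, hDsub d hdmem⟩, ?_, ?_⟩
    · have : σ.symm ⟨d, hDsub d hdmem⟩
          ≤ hDfin.toFinset.attach.sup fun d => σ.symm ⟨d.1, hDsub d.1 d.2⟩ :=
        Finset.le_sup (f := fun v : {x // x ∈ hDfin.toFinset} => σ.symm ⟨v.1, hDsub v.1 v.2⟩)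
          (Finset.mem_attach _ ⟨d, hdmem⟩)
      omega
    · rw [Equiv.apply_symm_apply]
  -- uniform lower bound on the sections
  have hsatn : ∀ n, n₀ ≤ n → ∀ z ∈ Kn n,
      A₀ * ‖z‖ ^ 2 ≤ ∑ j ∈ Finset.range n, ‖(⟪z, g j⟫:ℂ)‖ ^ 2 := by
    intro n hn z hz
    set Fn : Finset ℕ := (Finset.range n).image (fun k => ((σ k : ↥Δᶜ) : ℕ)) with hFn
    have hFnsub : (Fn : Set ℕ) ⊆ Δᶜ := by
      intro i hi
      simp only [hFn, Finset.coe_image, Set.mem_image, Finset.mem_coe] at hi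
      obtain ⟨k, -, rfl⟩ := hi
      exact (σ k).2
    have hcond : ∀ i, i < N → (i ∈ (Fn : Set ℕ) ↔ i ∈ D₀) := by
      intro i hiN
      constructor
      · intro hi
        rcases (hΔc i).mp (hFnsub hi) with h1 | h2
        · omega
        · exact h2
      · intro hi
        rcases hn₀ i hi hiN with ⟨k, hk, hki⟩
        simp only [hFn, Finset.coe_image, Set.mem_image, Finset.mem_coe]
        exact ⟨k, Finset.mem_range.mpr (lt_of_lt_of_le hk hn), hki⟩
    have hsatFn := hBaire (Fn : Set ℕ) hcond
    have himg : f '' (Fn : Set ℕ) = g '' Set.Iio n := by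
      rw [hFn, Finset.coe_image, Finset.coe_range, Set.image_image]
    have hzmem : z ∈ Submodule.span ℂ (f '' (Fn : Set ℕ)) := by
      rw [himg]
      exact hz
    have := hsatFn Fn le_rfl z hzmem
    have heval : (∑' i, Set.indicator (Fn : Set ℕ) (fun i => ‖(⟪z, f i⟫:ℂ)‖ ^ 2) i)
        = ∑ j ∈ Finset.range n, ‖(⟪z, g j⟫:ℂ)‖ ^ 2 := by
      rw [tsum_eq_sum (s := Fn) (fun i hi => Set.indicator_of_notMem (by simpa using hi) _)]
      rw [Finset.sum_congr rfl (fun i hi => Set.indicator_of_mem (by simpa using hi) _)]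
      rw [hFn]
      rw [Finset.sum_image ?hinj]
      case hinj =>
        intro k _ k' _ hkk'
        exact σ.injective (Subtype.ext hkk')
    rw [heval] at this
    exact this
  -- solving the finite-section equations
  have hZex : ∀ n, n₀ ≤ n → ∃ z, z ∈ Kn n ∧ Sfin n z = P x n := by
    intro n hn
    haveI := hfd n
    let T : Kn n →ₗ[ℂ] Kn n :=
      { toFun := fun v => ⟨Sfin n v.1, hSfin_mem n v.1⟩
        map_add' := fun a b => Subtype.ext (by
          simp only [hSfin, Submodule.coe_add, inner_add_right, add_smul,
            Finset.sum_add_distrib])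
        map_smul' := fun r a => Subtype.ext (by
          simp only [hSfin, Submodule.coe_smul, inner_smul_right, RingHom.id_apply, mul_smul,
            ← Finset.smul_sum]) }
    have hinj : Function.Injective T := by
      rw [injective_iff_map_eq_zero]
      intro a ha
      have h0 : Sfin n a.1 = 0 := congrArg Subtype.val ha
      have h1 := hsatn n hn a.1 a.2
      have h2 : ∑ j ∈ Finset.range n, ‖(⟪a.1, g j⟫:ℂ)‖ ^ 2
          = RCLike.re (⟪a.1, Sfin n a.1⟫:ℂ) := by
        rw [hre_Sfin]
        exact Finset.sum_congr rfl fun j _ => by rw [norm_inner_symm]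
      rw [h2, h0, inner_zero_right] at h1
      simp only [map_zero] at h1
      have h3 : ‖a.1‖ ^ 2 ≤ 0 := by nlinarith
      have h4 : ‖a.1‖ = 0 := by nlinarith [sq_nonneg ‖a.1‖, norm_nonneg a.1]
      exact Subtype.ext (norm_eq_zero.mp h4)
    have hsurjT := LinearMap.injective_iff_surjective.mp hinj
    obtain ⟨z, hzeq⟩ := hsurjT ⟨P x n, hPmem x n⟩
    exact ⟨z.1, z.2, congrArg Subtype.val hzeq⟩
  choose! Z hZmem hZeq using hZex
  -- tail estimates for the frame operator series
  have hvec_summ : Summable (fun j => c j • g j) := synth_summable hbg hcs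
  have hSy_split : ∀ n, SOp hbg y - Sfin n y = ∑' k, c (k + n) • g (k + n) := by
    intro n
    have hsplit := Summable.sum_add_tsum_nat_add (f := fun j => c j • g j) n hvec_summ
    have h1 : Sfin n y = ∑ j ∈ Finset.range n, c j • g j := rfl
    rw [SOp_apply, h1, ← hsplit]
    abel
  have htnorm : ∀ n, ‖SOp hbg y - Sfin n y‖ ≤ Real.sqrt B * Real.sqrt (τ n) := by
    intro n
    rw [hSy_split n]
    have hbsh := bessel_shift hbg n
    have hcsh : Summable (fun k => ‖c (k + n)‖ ^ 2) := (summable_nat_add_iff n).mpr hcs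
    have h2 := synth_tsum_norm hbsh (c := fun k => c (k + n)) hcsh
    exact h2
  -- the key estimate
  have hkey : ∀ n, n₀ ≤ n →
      ‖Z n - y‖ ≤ (Real.sqrt B * Real.sqrt (τ n) + B * δ n) / A₀ + δ n := by
    intro n hn
    have hvmem : Z n - P y n ∈ Kn n := Submodule.sub_mem _ (hZmem n hn) (hPmem y n)
    set v : H := Z n - P y n with hv
    have h1 : A₀ * ‖v‖ ^ 2 ≤ ∑ j ∈ Finset.range n, ‖(⟪v, g j⟫:ℂ)‖ ^ 2 := hsatn n hn v hvmem
    have h2 : ∑ j ∈ Finset.range n, ‖(⟪v, g j⟫:ℂ)‖ ^ 2 = RCLike.re (⟪v, Sfin n v⟫:ℂ) := by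
      rw [hre_Sfin]
      exact Finset.sum_congr rfl fun j _ => by rw [norm_inner_symm]
    have h4 : (⟪v, P x n⟫:ℂ) = ⟪v, x⟫ := by
      have := hPorth x n v hvmem
      rw [inner_sub_right] at this
      have := sub_eq_zero.mp this
      exact this.symm
    have h5 : (⟪v, Sfin n v⟫:ℂ) = ⟪v, SOp hbg y - Sfin n y⟫ + ⟪v, Sfin n (y - P y n)⟫ := by
      have h3 : Sfin n v = P x n - Sfin n (P y n) := by
        rw [hv, hSfin_sub, hZeq n hn]
      rw [h3, inner_sub_right, h4, ← hSy]
      rw [hSfin_sub n y (P y n), inner_sub_right, inner_sub_right]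
      ring
    have h6a : RCLike.re (⟪v, SOp hbg y - Sfin n y⟫:ℂ) ≤ ‖v‖ * (Real.sqrt B * Real.sqrt (τ n)) := by
      refine le_trans (re_inner_le_norm _ _) ?_
      exact mul_le_mul_of_nonneg_left (htnorm n) (norm_nonneg _)
    have h6b : RCLike.re (⟪v, Sfin n (y - P y n)⟫:ℂ) ≤ B * δ n * ‖v‖ := by
      have hsum : (⟪v, Sfin n (y - P y n)⟫:ℂ)
          = ∑ j ∈ Finset.range n, (⟪g j, y - P y n⟫:ℂ) * ⟪v, g j⟫ := hinner_Sfin n v _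
      refine le_trans (RCLike.re_le_norm _) ?_
      rw [hsum]
      refine le_trans (cs_finset_c (Finset.range n) _ _) ?_
      have hf1 : Real.sqrt (∑ j ∈ Finset.range n, ‖(⟪g j, y - P y n⟫:ℂ)‖ ^ 2)
          ≤ Real.sqrt B * δ n := by
        have := Real.sqrt_le_sqrt (bessel_fin hbg (y - P y n) (Finset.range n))
        rwa [Real.sqrt_mul hB.le, Real.sqrt_sq (norm_nonneg _)] at this
      have hf2 : Real.sqrt (∑ j ∈ Finset.range n, ‖(⟪v, g j⟫:ℂ)‖ ^ 2)
          ≤ Real.sqrt B * ‖v‖ := by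
        have he : ∑ j ∈ Finset.range n, ‖(⟪v, g j⟫:ℂ)‖ ^ 2
            = ∑ j ∈ Finset.range n, ‖(⟪g j, v⟫:ℂ)‖ ^ 2 :=
          Finset.sum_congr rfl fun j _ => by rw [norm_inner_symm]
        rw [he]
        have := Real.sqrt_le_sqrt (bessel_fin hbg v (Finset.range n))
        rwa [Real.sqrt_mul hB.le, Real.sqrt_sq (norm_nonneg _)] at this
      calc Real.sqrt (∑ j ∈ Finset.range n, ‖(⟪g j, y - P y n⟫:ℂ)‖ ^ 2)
            * Real.sqrt (∑ j ∈ Finset.range n, ‖(⟪v, g j⟫:ℂ)‖ ^ 2)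
          ≤ (Real.sqrt B * δ n) * (Real.sqrt B * ‖v‖) := by
            refine mul_le_mul hf1 hf2 (Real.sqrt_nonneg _) ?_
            positivity
        _ = (Real.sqrt B * Real.sqrt B) * δ n * ‖v‖ := by ring
        _ = B * δ n * ‖v‖ := by rw [Real.mul_self_sqrt hB.le]
    have h7 : A₀ * ‖v‖ ^ 2 ≤ ‖v‖ * (Real.sqrt B * Real.sqrt (τ n) + B * δ n) := by
      have h1' := h1
      rw [h2, h5, map_add] at h1'
      calc A₀ * ‖v‖ ^ 2
          ≤ RCLike.re (⟪v, SOp hbg y - Sfin n y⟫:ℂ)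
            + RCLike.re (⟪v, Sfin n (y - P y n)⟫:ℂ) := h1'
        _ ≤ ‖v‖ * (Real.sqrt B * Real.sqrt (τ n)) + B * δ n * ‖v‖ := add_le_add h6a h6b
        _ = ‖v‖ * (Real.sqrt B * Real.sqrt (τ n) + B * δ n) := by ring
    have h8 : ‖v‖ ≤ (Real.sqrt B * Real.sqrt (τ n) + B * δ n) / A₀ := by
      rcases eq_or_lt_of_le (norm_nonneg v) with h0 | h0
      · rw [← h0]
        have h9 : 0 ≤ Real.sqrt B * Real.sqrt (τ n) + B * δ n := by
          have := hδnonneg n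
          positivity
        positivity
      · rw [le_div_iff₀ hA₀]
        nlinarith
    calc ‖Z n - y‖ = ‖v + (P y n - y)‖ := by rw [hv]; congr 1; abel
      _ ≤ ‖v‖ + ‖P y n - y‖ := norm_add_le _ _
      _ = ‖v‖ + δ n := by rw [hδ]; simp only [← norm_neg (P y n - y)]; congr 1; abel
      _ ≤ (Real.sqrt B * Real.sqrt (τ n) + B * δ n) / A₀ + δ n := by
          exact add_le_add_left h8 _
  -- bounding the first sum
  have hT1 : ∀ n, n₀ ≤ n →
      (∑ i ∈ Finset.range n, ‖(⟪w n i, x⟫:ℂ) - ⟪u i, x⟫‖ ^ 2) ≤ B * ‖Z n - y‖ ^ 2 := by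
    intro n hn
    have hwid : ∀ i, i < n → (⟪w n i, x⟫:ℂ) = ⟪g i, Z n⟫ := by
      intro i hin
      obtain ⟨hwm, hweq⟩ := hw n i hin
      have hwmK : w n i ∈ Kn n := hwm
      have e1 : (⟪w n i, x⟫:ℂ) = ⟪w n i, P x n⟫ := by
        have h0 := hPorth x n (w n i) hwmK
        rw [inner_sub_right] at h0
        exact sub_eq_zero.mp h0
      have e2 : (⟪w n i, P x n⟫:ℂ) = ⟪w n i, Sfin n (Z n)⟫ := by rw [hZeq n hn]
      have e3 : (⟪w n i, Sfin n (Z n)⟫:ℂ)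
          = ∑ j ∈ Finset.range n, (⟪g j, Z n⟫:ℂ) * ⟪w n i, g j⟫ := hinner_Sfin n _ _
      have e4 : (⟪g i, Z n⟫:ℂ) = ∑ j ∈ Finset.range n, (⟪g j, Z n⟫:ℂ) * ⟪w n i, g j⟫ := by
        have hweq' : ∑ j ∈ Finset.range n, (⟪g j, w n i⟫:ℂ) • g j = g i := hweq
        conv_lhs => rw [← hweq']
        rw [sum_inner]
        refine Finset.sum_congr rfl fun j _ => ?_
        rw [inner_smul_left, inner_conj_symm, mul_comm]
      rw [e1, e2, e3, ← e4]
    calc (∑ i ∈ Finset.range n, ‖(⟪w n i, x⟫:ℂ) - ⟪u i, x⟫‖ ^ 2)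
        = ∑ i ∈ Finset.range n, ‖(⟪g i, Z n - y⟫:ℂ)‖ ^ 2 := by
          refine Finset.sum_congr rfl fun i hi => ?_
          rw [hwid i (Finset.mem_range.mp hi), huy i, ← inner_sub_right]
      _ ≤ B * ‖Z n - y‖ ^ 2 := bessel_fin hbg (Z n - y) (Finset.range n)
  -- final squeeze
  simp only [hT2]
  set κ : ℕ → ℝ := fun n => (Real.sqrt B * Real.sqrt (τ n) + B * δ n) / A₀ + δ n with hκ
  have hκ0 : Tendsto κ atTop (nhds 0) := by
    have hsq : Tendsto (fun n => Real.sqrt (τ n)) atTop (nhds 0) :=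
      (Real.continuous_sqrt.tendsto' 0 0 Real.sqrt_zero).comp hτ0
    have h1 := (((hsq.const_mul (Real.sqrt B)).add (hδ0.const_mul B)).div_const A₀).add hδ0
    rw [hκ]
    simpa using h1
  refine squeeze_zero' (g := fun n => B * κ n ^ 2 + τ n)
    (Filter.Eventually.of_forall fun n => ?_) ?_ ?_
  · refine add_nonneg (Finset.sum_nonneg fun i _ => sq_nonneg _) ?_
    exact tsum_nonneg fun k => sq_nonneg _
  · filter_upwards [eventually_ge_atTop n₀] with n hn
    have hb1 := hT1 n hn
    have hb2 := hkey n hn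
    have hb3 : B * ‖Z n - y‖ ^ 2 ≤ B * κ n ^ 2 := by
      refine mul_le_mul_of_nonneg_left ?_ hB.le
      exact pow_le_pow_left₀ (norm_nonneg _) hb2 2
    exact add_le_add (le_trans hb1 hb3) le_rfl
  · have h1 := ((hκ0.pow 2).const_mul B).add hτ0
    simpa using h1

end
end
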